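/- arXiv:2402.02983 — 9 statements merged into one kernel-verified Lean document; each statement's English description precedes it below -/
import Mathlib

section
/- Let C be a linear code of length n over a field F (i.e., an F-subspace of F^n) and G a finite group of order n. Then C is a left G-code if and only if G is isomorphic to a transitive subgroup of S_n contained in PAut(C). -/
/-- Action of a permutation on a vector by permuting coordinates: `σ(e_i) = e_{σ(i)}`. -/
def permVec {n : ℕ} {F : Type*} (σ : Equiv.Perm (Fin n)) (x : Fin n → F) : Fin n → F :=
  fun i => x (σ.symm i)

/-- The group of permutation automorphisms of a linear code `C`, as a set of permutations. -/
def PAutSet {F : Type*} [Field F] {n : ℕ} (C : Submodule F (Fin n → F)) :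
    Set (Equiv.Perm (Fin n)) :=
  {σ | ∀ x : Fin n → F, x ∈ C ↔ permVec σ x ∈ C}

/-- A subgroup of `S_n` is regular if it is transitive and has order `n`. -/
def IsRegularSubgroup {n : ℕ} (H : Subgroup (Equiv.Perm (Fin n))) : Prop :=
  (∀ i j : Fin n, ∃ h ∈ H, h i = j) ∧ Nat.card H = n

/-- `C` is a left `G`-code: some bijection of the standard basis with `G` carries `C`
to a left ideal of the group algebra `F G` (equivalently, the image subspace is stable
under left multiplication by every group element). -/
def IsLeftGCode {F : Type*} [Field F] {n : ℕ} (G : Type*) [Group G]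
    (C : Submodule F (Fin n → F)) : Prop :=
  ∃ φ : Fin n ≃ G, ∀ g : G, ∀ x ∈ C, (fun i => x (φ.symm (g * φ i))) ∈ C

/-- `C` is a (two-sided) `G`-code: some bijection of the standard basis with `G` carries `C`
to a two-sided ideal of the group algebra `F G`. -/
def IsGCode {F : Type*} [Field F] {n : ℕ} (G : Type*) [Group G]
    (C : Submodule F (Fin n → F)) : Prop :=
  ∃ φ : Fin n ≃ G, ∀ g : G, ∀ x ∈ C,
    (fun i => x (φ.symm (g * φ i))) ∈ C ∧ (fun i => x (φ.symm (φ i * g))) ∈ C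

theorem stmt7 {F : Type*} [Field F] {n : ℕ} (C : Submodule F (Fin n → F))
    (G : Type*) [Group G] [Fintype G] (hG : Fintype.card G = n) :
    IsLeftGCode G C ↔
      ∃ H : Subgroup (Equiv.Perm (Fin n)), (∀ i j : Fin n, ∃ h ∈ H, h i = j) ∧
        (H : Set (Equiv.Perm (Fin n))) ⊆ PAutSet C ∧ Nonempty (G ≃* H) := by
  constructor
  · rintro ⟨φ, hφ⟩
    set ρ : G →* Equiv.Perm (Fin n) :=
      { toFun := fun g => (φ.trans (Equiv.mulLeft g)).trans φ.symm
        map_one' := by ext i; simp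
        map_mul' := by intro g h; ext i; simp [mul_assoc] } with hρ
    have hρ_apply : ∀ g i, ρ g i = φ.symm (g * φ i) := fun g i => rfl
    have hρ_symm : ∀ (g : G) i, (ρ g).symm i = φ.symm (g⁻¹ * φ i) := by
      intro g i
      have h : (ρ g).symm = ρ g⁻¹ := by rw [map_inv]; rfl
      rw [h]; rfl
    have hρinj : Function.Injective ρ := by
      intro g g' h
      have := congrArg (fun σ : Equiv.Perm (Fin n) => φ (σ (φ.symm 1))) h
      simpa [hρ_apply] using this
    refine ⟨ρ.range, ?_, ?_, ⟨MonoidHom.ofInjective hρinj⟩⟩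
    · intro i j
      refine ⟨ρ (φ j * (φ i)⁻¹), ⟨_, rfl⟩, ?_⟩
      rw [hρ_apply, inv_mul_cancel_right, Equiv.symm_apply_apply]
    · rintro σ ⟨g, rfl⟩ x
      show x ∈ C ↔ (fun i => x ((ρ g).symm i)) ∈ C
      constructor
      · intro hx
        have heq : (fun i => x ((ρ g).symm i)) = fun i => x (φ.symm (g⁻¹ * φ i)) :=
          funext fun i => by rw [hρ_symm]
        rw [heq]
        exact hφ g⁻¹ x hx
      · intro hx
        have := hφ g _ hx
        have he : (fun i => (fun i => x ((ρ g).symm i)) (φ.symm (g * φ i))) = x := by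
          funext i
          simp [hρ_symm]
        rwa [he] at this
  · rintro ⟨H, htrans, hsub, ⟨e⟩⟩
    have hn : 0 < n := hG ▸ Fintype.card_pos
    set i₀ : Fin n := ⟨0, hn⟩
    have hcardH : Nat.card H = n := by
      rw [← Nat.card_congr e.toEquiv, Nat.card_eq_fintype_card, hG]
    set f : H → Fin n := fun h => (h : Equiv.Perm (Fin n)) i₀ with hf
    have hfsurj : Function.Surjective f := by
      intro j
      obtain ⟨h, hH, hh⟩ := htrans i₀ j
      exact ⟨⟨h, hH⟩, hh⟩
    have hfbij : Function.Bijective f := by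
      rw [Nat.bijective_iff_surjective_and_card]
      exact ⟨hfsurj, by simp [hcardH]⟩
    set ψ : G → Fin n := fun g => f (e g) with hψ
    have hψbij : Function.Bijective ψ := hfbij.comp e.bijective
    refine ⟨(Equiv.ofBijective ψ hψbij).symm, ?_⟩
    intro g x hx
    set φ : Fin n ≃ G := (Equiv.ofBijective ψ hψbij).symm with hφdef
    have hφsymm : ∀ g, φ.symm g = ψ g := fun g => rfl
    have key : ∀ i, φ.symm (g * φ i) = (e g : Equiv.Perm (Fin n)) i := by
      intro i
      have h1 : ψ (g * φ i) = (e g : Equiv.Perm (Fin n)) (ψ (φ i)) := by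
        simp only [hψ, hf, map_mul]
        rfl
      have h2 : ψ (φ i) = i := by
        rw [← hφsymm, Equiv.symm_apply_apply]
      rw [hφsymm, h1, h2]
    have hmem : (((e g)⁻¹ : H) : Equiv.Perm (Fin n)) ∈ H := ((e g)⁻¹ : H).2
    have hC := (hsub hmem x).mp hx
    have heq : (fun i => x (φ.symm (g * φ i))) =
        permVec (((e g)⁻¹ : H) : Equiv.Perm (Fin n)) x :=
      funext fun i => by rw [key]; rfl
    rwa [heq]
end

section
/- Let C be a linear code of length n over a field F and G a finite group of order n. Then C is a (two-sided) G-code if and only if G is isomorphic to a transitive subgroup H of S_n such that both H and the centralizer C_{S_n}(H) are contained in PAut(C). -/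
/-- Left regular representation transported along `φ`. -/
def leftReg {n : ℕ} {G : Type*} [Group G] (φ : Fin n ≃ G) : G →* Equiv.Perm (Fin n) where
  toFun g := (φ.trans (Equiv.mulLeft g)).trans φ.symm
  map_one' := by ext i; simp
  map_mul' g h := by ext i; simp [mul_assoc]

lemma leftReg_apply {n : ℕ} {G : Type*} [Group G] (φ : Fin n ≃ G) (g : G) (i : Fin n) :
    leftReg φ g i = φ.symm (g * φ i) := rfl

lemma leftReg_symm_apply {n : ℕ} {G : Type*} [Group G] (φ : Fin n ≃ G) (g : G) (i : Fin n) :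
    (leftReg φ g).symm i = φ.symm (g⁻¹ * φ i) := by
  have h : (leftReg φ g).symm = leftReg φ g⁻¹ := by
    rw [← Equiv.Perm.inv_def, ← map_inv]
  rw [h, leftReg_apply]

lemma leftReg_injective {n : ℕ} {G : Type*} [Group G] (φ : Fin n ≃ G) :
    Function.Injective (leftReg φ) := by
  intro g g' h
  have := congrArg (fun σ : Equiv.Perm (Fin n) => φ (σ (φ.symm 1))) h
  simpa [leftReg_apply] using this

theorem stmt8 {F : Type*} [Field F] {n : ℕ} (C : Submodule F (Fin n → F))
    (G : Type*) [Group G] [Fintype G] (hG : Fintype.card G = n) :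
    IsGCode G C ↔
      ∃ H : Subgroup (Equiv.Perm (Fin n)), (∀ i j : Fin n, ∃ h ∈ H, h i = j) ∧
        (H : Set (Equiv.Perm (Fin n))) ⊆ PAutSet C ∧
        ((Subgroup.centralizer (H : Set (Equiv.Perm (Fin n))) : Subgroup (Equiv.Perm (Fin n))) :
            Set (Equiv.Perm (Fin n))) ⊆ PAutSet C ∧
        Nonempty (G ≃* H) := by
  constructor
  · rintro ⟨φ, hφ⟩
    refine ⟨(leftReg φ).range, ?_, ?_, ?_, ⟨MonoidHom.ofInjective (leftReg_injective φ)⟩⟩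
    · intro i j
      refine ⟨leftReg φ (φ j * (φ i)⁻¹), ⟨_, rfl⟩, ?_⟩
      rw [leftReg_apply, mul_assoc, inv_mul_cancel, mul_one, Equiv.symm_apply_apply]
    · rintro σ ⟨g, rfl⟩ x
      constructor
      · intro hx
        have h1 := (hφ g⁻¹ x hx).1
        have hfun : permVec (leftReg φ g) x = fun i => x (φ.symm (g⁻¹ * φ i)) := by
          funext i; simp [permVec, leftReg_symm_apply]
        rw [hfun]; exact h1
      · intro hx
        have h1 := (hφ g _ hx).1
        have hfun : (fun i => permVec (leftReg φ g) x (φ.symm (g * φ i))) = x := by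
          funext i
          simp [permVec, leftReg_symm_apply, ← mul_assoc]
        rwa [hfun] at h1
    · -- centralizer
      intro σ hσ
      rw [SetLike.mem_coe, Subgroup.mem_centralizer_iff] at hσ
      have form : ∀ σ' : Equiv.Perm (Fin n), (∀ g : G, leftReg φ g * σ' = σ' * leftReg φ g) →
          ∀ i, σ' i = φ.symm (φ i * φ (σ' (φ.symm 1))) := by
        intro σ' hσ' i
        have := congrArg (fun τ : Equiv.Perm (Fin n) => τ (φ.symm 1)) (hσ' (φ i))
        simp only [Equiv.Perm.mul_apply, leftReg_apply] at this
        simpa using this.symm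
      have hσc : ∀ g : G, leftReg φ g * σ = σ * leftReg φ g :=
        fun g => hσ _ ⟨g, rfl⟩
      have hσic : ∀ g : G, leftReg φ g * σ⁻¹ = σ⁻¹ * leftReg φ g :=
        fun g => (Commute.inv_right (hσc g) : _)
      intro x
      constructor
      · intro hx
        have h1 := (hφ (φ (σ⁻¹ (φ.symm 1))) x hx).2
        have hfun : permVec σ x = fun i => x (φ.symm (φ i * φ (σ⁻¹ (φ.symm 1)))) := by
          funext i
          rw [← form σ⁻¹ hσic i]
          simp [permVec, ← Equiv.Perm.inv_def]
        rw [hfun]; exact h1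
      · intro hx
        have h1 := (hφ (φ (σ (φ.symm 1))) _ hx).2
        have hfun : (fun i => permVec σ x (φ.symm (φ i * φ (σ (φ.symm 1))))) = x := by
          funext i
          rw [← form σ hσc i]
          simp [permVec]
        rwa [hfun] at h1
  · rintro ⟨H, htrans, hH, hcent, ⟨e⟩⟩
    have hn : 0 < n := hG ▸ Fintype.card_pos
    set i₀ : Fin n := ⟨0, hn⟩ with hi₀
    set ψ : G → Fin n := fun g => (e g : Equiv.Perm (Fin n)) i₀ with hψ
    have hsurj : Function.Surjective ψ := by
      intro j
      obtain ⟨h, hh, hj⟩ := htrans i₀ j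
      refine ⟨e.symm ⟨h, hh⟩, ?_⟩
      simp [hψ, hj]
    have hbij : Function.Bijective ψ := by
      rw [Fintype.bijective_iff_surjective_and_card]
      exact ⟨hsurj, by simp [hG]⟩
    set φ := (Equiv.ofBijective ψ hbij).symm with hφdef
    have hφsymm : ∀ g, φ.symm g = ψ g := fun g => rfl
    have key : ∀ (g : G) (i : Fin n), φ.symm (g * φ i) = (e g : Equiv.Perm (Fin n)) i := by
      intro g i
      have h1 : ψ (φ i) = i := by
        rw [← hφsymm]; simp
      rw [hφsymm, hψ]
      simp only [map_mul]
      rw [Subgroup.coe_mul, Equiv.Perm.mul_apply]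
      exact congrArg _ h1
    refine ⟨φ, fun g x hx => ⟨?_, ?_⟩⟩
    · have hmem : ((e g : Equiv.Perm (Fin n)))⁻¹ ∈ (H : Set (Equiv.Perm (Fin n))) := by
        exact inv_mem (SetLike.coe_mem (e g))
      have h1 := (hH hmem x).1 hx
      have hfun : (fun i => x (φ.symm (g * φ i))) =
          permVec ((e g : Equiv.Perm (Fin n)))⁻¹ x := by
        funext i
        simp [permVec, key, Equiv.Perm.inv_def]
      rw [hfun]; exact h1
    · set ρ : Equiv.Perm (Fin n) := φ.trans ((Equiv.mulRight g).trans φ.symm) with hρ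
      have hρa : ∀ i, ρ i = φ.symm (φ i * g) := fun i => rfl
      have hρc : ρ ∈ Subgroup.centralizer (H : Set (Equiv.Perm (Fin n))) := by
        rw [Subgroup.mem_centralizer_iff]
        intro h hh
        have hhi : ∀ j, h j = φ.symm (e.symm ⟨h, hh⟩ * φ j) := by
          intro j
          rw [key]
          simp
        ext i
        rw [Equiv.Perm.mul_apply, Equiv.Perm.mul_apply, hhi, hρa, hρa, hhi,
          Equiv.apply_symm_apply, Equiv.apply_symm_apply, mul_assoc]
      have hmem : ρ⁻¹ ∈ ((Subgroup.centralizer (H : Set (Equiv.Perm (Fin n)))) :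
          Set (Equiv.Perm (Fin n))) := by
        simpa using inv_mem hρc
      have h1 := (hcent hmem x).1 hx
      have hfun : (fun i => x (φ.symm (φ i * g))) = permVec ρ⁻¹ x := by
        funext i
        rw [← hρa]
        simp [permVec, Equiv.Perm.inv_def]
      rw [hfun]; exact h1
end

section
/- Let C be a linear code of length n over a field F. Then C is a left group code (i.e., a left G-code for some group G) if and only if PAut(C) contains a regular subgroup of S_n. -/
theorem stmt9 {F : Type*} [Field F] {n : ℕ} (C : Submodule F (Fin n → F)) :
    (∃ (G : Type) (inst : Group G), @IsLeftGCode F _ n G inst C) ↔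
      ∃ H : Subgroup (Equiv.Perm (Fin n)), IsRegularSubgroup H ∧
        (H : Set (Equiv.Perm (Fin n))) ⊆ PAutSet C := by
  constructor
  · rintro ⟨G, inst, φ, hφ⟩
    let ρ : G →* Equiv.Perm (Fin n) :=
      MonoidHom.mk' (fun g => (φ.trans (Equiv.mulLeft g)).trans φ.symm) (by
        intro g h; ext i; simp [mul_assoc])
    have hρ : ∀ g i, ρ g i = φ.symm (g * φ i) := fun g i => rfl
    have hρs : ∀ g i, (ρ g).symm i = φ.symm (g⁻¹ * φ i) := by
      intro g i
      have : (ρ g)⁻¹ = ρ g⁻¹ := by rw [← map_inv]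
      rw [← Equiv.Perm.inv_def, this]; rfl
    refine ⟨ρ.range, ⟨?_, ?_⟩, ?_⟩
    · intro i j
      refine ⟨ρ (φ j * (φ i)⁻¹), ⟨_, rfl⟩, ?_⟩
      rw [hρ]; simp
    · have hinj : Function.Injective ρ := by
        intro g h hgh
        have := congrArg (fun σ : Equiv.Perm (Fin n) => φ (σ (φ.symm 1))) hgh
        simpa [hρ] using this
      have h1 : Nat.card ρ.range = Nat.card G :=
        Nat.card_congr (Equiv.ofInjective ρ hinj).symm
      rw [h1, ← Nat.card_congr φ, Nat.card_eq_fintype_card, Fintype.card_fin]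
    · rintro σ ⟨g, rfl⟩ x
      constructor
      · intro hx
        have h2 := hφ g⁻¹ x hx
        have : permVec (ρ g) x = fun i => x (φ.symm (g⁻¹ * φ i)) := by
          funext i; rw [permVec, hρs]
        rwa [this]
      · intro hx
        have h2 := hφ g _ hx
        have : (fun i => (permVec (ρ g) x) (φ.symm (g * φ i))) = x := by
          funext i; rw [permVec, hρs]; simp
        rwa [this] at h2
  · rintro ⟨H, ⟨htrans, hcard⟩, hsub⟩
    have hpos : 0 < n := by rw [← hcard]; exact Nat.card_pos
    set i0 : Fin n := ⟨0, hpos⟩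
    let ψ : H → Fin n := fun h => (h : Equiv.Perm (Fin n)) i0
    have hsurj : Function.Surjective ψ := fun j => by
      obtain ⟨h, hh, hhi⟩ := htrans i0 j
      exact ⟨⟨h, hh⟩, hhi⟩
    have hbij : Function.Bijective ψ := by
      rw [Nat.bijective_iff_surjective_and_card]
      refine ⟨hsurj, ?_⟩
      rw [hcard, Nat.card_eq_fintype_card, Fintype.card_fin]
    let φ : Fin n ≃ H := (Equiv.ofBijective ψ hbij).symm
    refine ⟨H, inferInstance, φ, ?_⟩
    intro g x hx
    have key : ∀ i, (φ.symm (g * φ i) : Fin n) = (g : Equiv.Perm (Fin n)) i := by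
      intro i
      show ψ (g * φ i) = _
      have : ψ (φ i) = i := (Equiv.ofBijective ψ hbij).apply_symm_apply i
      calc ψ (g * φ i) = (g : Equiv.Perm (Fin n)) (ψ (φ i)) := rfl
        _ = (g : Equiv.Perm (Fin n)) i := by rw [this]
    have hmem := hsub (H.inv_mem g.2)
    have h2 := (hmem x).mp hx
    have : permVec ((g : Equiv.Perm (Fin n))⁻¹) x
        = (fun i => x (φ.symm (g * φ i))) := by
      funext i; rw [permVec, key]; rfl
    rwa [this] at h2
end

section
/- Let F be a finite field with q elements, n ≥ 1, and v ∈ F^n nonzero. If the one-dimensional code Fv is a left group code, then the entries of v are of the form u, ξu, ξ²u, ..., ξ^{h-1}u for some u ∈ F* and some primitive h-th root of unity ξ ∈ F, each value appearing exactly n/h times among the coordinates of v. -/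
theorem stmt10 {F : Type*} [Field F] [Fintype F] [DecidableEq F] {n : ℕ}
    (v : Fin n → F) (hv : v ≠ 0)
    (hcode : ∃ (G : Type) (inst : Group G), @IsLeftGCode F _ n G inst (Submodule.span F {v})) :
    ∃ (u ξ : F) (d s : ℕ), u ≠ 0 ∧ IsPrimitiveRoot ξ d ∧ n = d * s ∧
      (∀ i : Fin n, ∃ j < d, v i = ξ ^ j * u) ∧
      ∀ j < d, (Finset.univ.filter fun i : Fin n => v i = ξ ^ j * u).card = s := by
  obtain ⟨G, instG, φ, hφ⟩ := hcode
  haveI : Fintype G := Fintype.ofEquiv (Fin n) φ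
  have hmem : v ∈ Submodule.span F {v} := Submodule.mem_span_singleton_self v
  have key : ∀ g : G, ∃ cg : F, (fun i => v (φ.symm (g * φ i))) = cg • v := by
    intro g
    obtain ⟨cg, hcg⟩ := (Submodule.mem_span_singleton).mp (hφ g v hmem)
    exact ⟨cg, hcg.symm⟩
  choose c hc using key
  obtain ⟨i₀, hi₀⟩ := Function.ne_iff.mp hv
  simp only [Pi.zero_apply] at hi₀
  set u := v i₀ with hu
  -- value formula: v i = c g * v i₀ when g * φ i₀ = φ i
  have hval : ∀ g : G, v (φ.symm (g * φ i₀)) = c g * u := by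
    intro g
    have := congrFun (hc g) i₀
    simpa using this
  -- c is multiplicative
  have hmul : ∀ g h : G, c (g * h) = c g * c h := by
    intro g h
    have h1 : (fun i => v (φ.symm ((g * h) * φ i))) = (c g * c h) • v := by
      funext i
      have e1 : v (φ.symm (g * h * φ i)) = v (φ.symm (g * φ (φ.symm (h * φ i)))) := by
        rw [Equiv.apply_symm_apply, mul_assoc]
      rw [e1]
      have := congrFun (hc g) (φ.symm (h * φ i))
      rw [this]
      have := congrFun (hc h) i
      simp only [Pi.smul_apply, smul_eq_mul] at this ⊢
      rw [this]; ring
    have h2 := (hc (g * h)).symm.trans h1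
    have := congrFun h2
    obtain ⟨i₁, hi₁⟩ := Function.ne_iff.mp hv
    have := this i₁
    simp only [Pi.smul_apply, smul_eq_mul] at this
    exact mul_right_cancel₀ hi₁ this
  have hone : c 1 = 1 := by
    have := congrFun (hc 1) i₀
    simp only [one_mul, Equiv.symm_apply_apply, Pi.smul_apply, smul_eq_mul] at this
    exact (mul_right_cancel₀ hi₀ (by rw [← this, one_mul])).symm
  have hnz : ∀ g : G, c g ≠ 0 := by
    intro g hg
    have h1 := hmul g g⁻¹
    rw [mul_inv_cancel, hone, hg, zero_mul] at h1
    exact one_ne_zero h1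
  -- the monoid hom into units
  let c' : G →* F := { toFun := c, map_one' := hone, map_mul' := hmul }
  let cu : G →* Fˣ := c'.toHomUnits
  have hcu : ∀ g : G, (cu g : F) = c g := fun g => rfl
  -- cyclic image
  haveI : Finite (cu.range) := inferInstance
  obtain ⟨gen, hgen⟩ := IsCyclic.exists_generator (α := cu.range)
  set ζ : Fˣ := (gen : Fˣ) with hζ
  set d : ℕ := orderOf ζ with hd
  have hdpos : 0 < d := orderOf_pos ζ
  have hζmem : ζ ∈ cu.range := gen.2
  -- range = zpowers ζ
  have hrange : cu.range = Subgroup.zpowers ζ := by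
    apply le_antisymm
    · intro x hx
      obtain ⟨k, hk⟩ := hgen ⟨x, hx⟩
      exact ⟨k, by simpa [SubgroupClass.coe_zpow] using congrArg Subtype.val hk⟩
    · exact (Subgroup.zpowers_le).mpr hζmem
  set s : ℕ := Nat.card (cu.ker) with hs
  -- n = d * s
  have hn : n = d * s := by
    have h1 : Nat.card G = n := by
      rw [Nat.card_eq_fintype_card, ← Fintype.card_fin n]
      exact (Fintype.card_congr φ).symm
    have h2 : Nat.card G = Nat.card (G ⧸ cu.ker) * Nat.card cu.ker :=
      Subgroup.card_eq_card_quotient_mul_card_subgroup cu.ker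
    have h3 : Nat.card (G ⧸ cu.ker) = Nat.card cu.range :=
      Nat.card_congr (QuotientGroup.quotientKerEquivRange cu).toEquiv
    have h4 : Nat.card cu.range = d := by
      rw [hrange]; exact Nat.card_zpowers ζ
    rw [← h1, h2, h3, h4]
  -- translation bijection
  let ψ : Fin n ≃ G := φ.trans (Equiv.mulRight (φ i₀)⁻¹)
  have hψ : ∀ i, ψ i = φ i * (φ i₀)⁻¹ := fun i => rfl
  have hvi : ∀ i : Fin n, v i = c (ψ i) * u := by
    intro i
    have := hval (ψ i)
    rw [hψ, inv_mul_cancel_right, Equiv.symm_apply_apply] at this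
    exact this
  -- every cu value is a power of ζ
  have hpow : ∀ g : G, ∃ j < d, cu g = ζ ^ j := by
    intro g
    have : cu g ∈ Subgroup.zpowers ζ := hrange ▸ (⟨g, rfl⟩ : cu g ∈ cu.range)
    obtain ⟨m, hm⟩ := mem_powers_iff_mem_zpowers.mpr this
    refine ⟨m % d, Nat.mod_lt _ hdpos, ?_⟩
    rw [← hm, hd, pow_mod_orderOf]
  refine ⟨u, (ζ : F), d, s, hi₀, ?_, hn, ?_, ?_⟩
  · exact IsPrimitiveRoot.coe_units_iff.mpr (IsPrimitiveRoot.orderOf ζ)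
  · intro i
    obtain ⟨j, hj, hje⟩ := hpow (ψ i)
    refine ⟨j, hj, ?_⟩
    rw [hvi i, ← hcu, hje, Units.val_pow_eq_pow_val]
  · intro j hj
    -- condition reformulation
    have hcond : ∀ i : Fin n, (v i = (ζ : F) ^ j * u ↔ cu (ψ i) = ζ ^ j) := by
      intro i
      rw [hvi i]
      constructor
      · intro h
        have := mul_right_cancel₀ hi₀ h
        ext
        rw [hcu, this, Units.val_pow_eq_pow_val]
      · intro h
        rw [← hcu, h, Units.val_pow_eq_pow_val]
    -- pick g₀ with cu g₀ = ζ ^ j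
    have : ζ ^ j ∈ cu.range := by
      rw [hrange]; exact Subgroup.pow_mem _ (Subgroup.mem_zpowers ζ) j
    obtain ⟨g₀, hg₀⟩ := this
    -- equiv between fiber and kernel
    let e : {i : Fin n // cu (ψ i) = ζ ^ j} ≃ cu.ker :=
      { toFun := fun i => ⟨g₀⁻¹ * ψ i.1, by
          rw [MonoidHom.mem_ker, map_mul, map_inv, hg₀, i.2, inv_mul_cancel]⟩
        invFun := fun k => ⟨ψ.symm (g₀ * k.1), by
          rw [Equiv.apply_symm_apply, map_mul, hg₀, MonoidHom.mem_ker.mp k.2, mul_one]⟩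
        left_inv := fun i => by
          ext
          simp only [mul_inv_cancel_left, Equiv.symm_apply_apply]
        right_inv := fun k => by
          ext
          simp only [Equiv.apply_symm_apply, inv_mul_cancel_left] }
    calc (Finset.univ.filter fun i : Fin n => v i = (ζ : F) ^ j * u).card
        = (Finset.univ.filter fun i : Fin n => cu (ψ i) = ζ ^ j).card := by
          apply Finset.card_bij (fun i _ => i)
          · intro i hi
            simp only [Finset.mem_filter, Finset.mem_univ, true_and] at hi ⊢
            exact (hcond i).mp hi
          · intro a b _ _ h; exact h
          · intro b hb
            simp only [Finset.mem_filter, Finset.mem_univ, true_and] at hb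
            exact ⟨b, by simp [Finset.mem_filter, (hcond b).mpr hb], rfl⟩
      _ = Fintype.card {i : Fin n // cu (ψ i) = ζ ^ j} := (Fintype.card_subtype _).symm
      _ = Nat.card {i : Fin n // cu (ψ i) = ζ ^ j} := (Nat.card_eq_fintype_card).symm
      _ = Nat.card cu.ker := Nat.card_congr e
      _ = s := rfl
end

section
/- Let F be a finite field, ξ ∈ F* a primitive h-th root of unity, u ∈ F*, and n = hs. Let v ∈ F^n have entries u, ξu, ..., ξ^{h-1}u each appearing s times. Let G be a group of order n with a normal subgroup N of order s such that G/N is cyclic. Then the one-dimensional code Fv is a left G-code. -/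
theorem stmt11 {F : Type*} [Field F] [Fintype F] [DecidableEq F] {d s n : ℕ}
    (hn : n = d * s) (ξ u : F) (hu : u ≠ 0) (hξ : IsPrimitiveRoot ξ d)
    (v : Fin n → F)
    (hcount : ∀ j < d, (Finset.univ.filter fun i : Fin n => v i = ξ ^ j * u).card = s)
    (G : Type*) [Group G] [Fintype G] (hG : Fintype.card G = n)
    (N : Subgroup G) (hNnormal : N.Normal) (hNcard : Nat.card N = s)
    (hcyc : IsCyclic (G ⧸ N)) :
    IsLeftGCode G (Submodule.span F {v}) := by
  classical
  have hs : s ≠ 0 := by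
    rw [← hNcard]; exact Nat.card_pos.ne'
  have hnpos : 0 < n := by rw [← hG]; exact Fintype.card_pos
  have hd : d ≠ 0 := by rintro rfl; simp [hn] at hnpos
  have : NeZero d := ⟨hd⟩
  -- card of quotient
  have hquot : Nat.card (G ⧸ N) = d := by
    have h1 := Subgroup.card_eq_card_quotient_mul_card_subgroup N
    rw [Nat.card_eq_fintype_card, hG, hNcard, hn] at h1
    exact Nat.eq_of_mul_eq_mul_right (Nat.pos_of_ne_zero hs) h1.symm
  -- the character χ : G →* Multiplicative (ZMod d)
  subst hquot
  set D := Nat.card (G ⧸ N) with hD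
  let e : Multiplicative (ZMod D) ≃* (G ⧸ N) := zmodCyclicMulEquiv hcyc
  let χ : G →* Multiplicative (ZMod D) :=
    (e.symm.toMonoidHom).comp (QuotientGroup.mk' N)
  have hχsurj : Function.Surjective χ :=
    e.symm.surjective.comp (QuotientGroup.mk'_surjective N)
  have hχmem : ∀ g : G, χ g = 1 ↔ g ∈ N := by
    intro g
    constructor
    · intro h
      have : QuotientGroup.mk' N g = 1 := by
        have := congrArg e h
        simpa [χ] using this
      exact (QuotientGroup.eq_one_iff g).mp this
    · intro h
      have h2 : QuotientGroup.mk' N g = 1 := (QuotientGroup.eq_one_iff g).mpr h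
      show e.symm (QuotientGroup.mk' N g) = 1
      rw [h2, map_one]
  -- value function and vector w
  set val : G → ℕ := fun g => (Multiplicative.toAdd (χ g)).val with hval
  have hvallt : ∀ g, val g < D := fun g => ZMod.val_lt _
  set w : G → F := fun g => ξ ^ val g * u with hw
  have hpowmod : ∀ m : ℕ, ξ ^ (m % D) = ξ ^ m := by
    intro m
    conv_rhs => rw [← Nat.mod_add_div m D]
    rw [pow_add, pow_mul, hξ.pow_eq_one, one_pow, mul_one]
  have hmul : ∀ g h : G, w (g * h) = ξ ^ val g * w h := by
    intro g h
    have : val (g * h) = (val g + val h) % D := by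
      simp only [hval, map_mul]
      exact ZMod.val_add _ _
    simp only [hw, this, hpowmod, pow_add, mul_assoc]
  -- distinct values
  have hdistinct : ∀ j k, j < D → k < D → ξ ^ j * u = ξ ^ k * u → j = k := by
    intro j k hj hk h
    exact hξ.pow_inj hj hk (mul_right_cancel₀ hu h)
  -- every coordinate value of v is of the form ξ^j * u
  have hcover : ∀ i : Fin n, ∃ j < D, v i = ξ ^ j * u := by
    have hT : (Finset.range D).biUnion
        (fun j => Finset.univ.filter fun i : Fin n => v i = ξ ^ j * u) = Finset.univ := by
      apply Finset.eq_univ_of_card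
      rw [Finset.card_biUnion]
      · rw [Finset.sum_congr rfl (fun j hj => hcount j (Finset.mem_range.mp hj))]
        simp [hn, mul_comm]
      · intro j hj k hk hjk
        simp only [Finset.disjoint_left, Finset.mem_filter]
        rintro i ⟨-, h1⟩ ⟨-, h2⟩
        exact hjk (hdistinct j k (Finset.mem_range.mp hj) (Finset.mem_range.mp hk)
          (h1 ▸ h2 ▸ rfl))
    intro i
    have : i ∈ (Finset.range D).biUnion
        (fun j => Finset.univ.filter fun i : Fin n => v i = ξ ^ j * u) := by
      rw [hT]; exact Finset.mem_univ i
    obtain ⟨j, hj, hij⟩ := Finset.mem_biUnion.mp this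
    exact ⟨j, Finset.mem_range.mp hj, (Finset.mem_filter.mp hij).2⟩
  -- fibers of χ have cardinality s
  have hχfib : ∀ z : Multiplicative (ZMod D),
      Fintype.card {g : G // χ g = z} = s := by
    intro z
    obtain ⟨g0, hg0⟩ := hχsurj z
    have e2 : {g : G // χ g = z} ≃ {h : G // h ∈ N} :=
      (Equiv.mulLeft g0⁻¹).subtypeEquiv (by
        intro g
        simp only [Equiv.coe_mulLeft]
        rw [← hχmem (g0⁻¹ * g)]
        rw [map_mul, map_inv, hg0]
        constructor
        · intro h; rw [h]; simp
        · intro h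
          have := congrArg (fun t => z * t) h
          simpa using this)
    rw [Fintype.card_congr e2, ← hNcard]
    exact Nat.card_eq_fintype_card.symm
  -- fiber cardinalities of v and w agree
  have hfib : ∀ c : F, Fintype.card {i : Fin n // v i = c}
      = Fintype.card {g : G // w g = c} := by
    intro c
    by_cases hc : ∃ j < D, c = ξ ^ j * u
    · obtain ⟨j, hj, rfl⟩ := hc
      have hL : Fintype.card {i : Fin n // v i = ξ ^ j * u} = s := by
        rw [Fintype.card_subtype]
        exact hcount j hj
      have hR : Fintype.card {g : G // w g = ξ ^ j * u} = s := by
        have : ∀ g : G, w g = ξ ^ j * u ↔ χ g = Multiplicative.ofAdd (j : ZMod D) := by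
          intro g
          constructor
          · intro h
            have hvj : val g = j := hdistinct _ _ (hvallt g) hj h
            have : Multiplicative.toAdd (χ g) = (j : ZMod D) := by
              rw [← hvj]
              simp [hval, ZMod.natCast_val, ZMod.cast_id]
            exact congrArg Multiplicative.ofAdd this
          · intro h
            have : val g = j := by
              simp only [hval, h]
              simp [ZMod.val_cast_of_lt hj]
            rw [hw]; simp only [this]
        rw [Fintype.card_congr (Equiv.subtypeEquivRight this)]
        exact hχfib _
      rw [hL, hR]
    · push_neg at hc
      have hL : Fintype.card {i : Fin n // v i = c} = 0 := by
        rw [Fintype.card_eq_zero_iff]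
        constructor
        rintro ⟨i, hi⟩
        obtain ⟨j, hj, hij⟩ := hcover i
        exact (hc j hj (hi ▸ hij)).elim
      have hR : Fintype.card {g : G // w g = c} = 0 := by
        rw [Fintype.card_eq_zero_iff]
        constructor
        rintro ⟨g, hg⟩
        exact (hc (val g) (hvallt g) (hg ▸ rfl)).elim
      rw [hL, hR]
  -- the bijection
  let φ : Fin n ≃ G := Equiv.ofFiberEquiv (f := v) (g := w)
    (fun c => Fintype.equivOfCardEq (hfib c))
  have hφ : ∀ i, w (φ i) = v i := fun i => Equiv.ofFiberEquiv_map _ i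
  have hφ' : ∀ g : G, v (φ.symm g) = w g := by
    intro g
    rw [← hφ (φ.symm g), Equiv.apply_symm_apply]
  refine ⟨φ, ?_⟩
  intro g x hx
  rw [Submodule.mem_span_singleton] at hx ⊢
  obtain ⟨c, rfl⟩ := hx
  refine ⟨c * ξ ^ val g, ?_⟩
  funext i
  simp only [Pi.smul_apply, smul_eq_mul]
  rw [hφ' (g * φ i), hmul g (φ i), hφ i]
  ring
end

section
/- Let G be a finite group having abelian subgroups A and B with G = AB (every element of G is a product ab with a ∈ A, b ∈ B). Then every (two-sided) G-code over any field is also an abelian group code. -/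
/-- The permutation `g ↦ a * g * b⁻¹` of a group. -/
def lrPerm {G : Type*} [Group G] (a b : G) : Equiv.Perm G :=
  (Equiv.mulLeft a).trans (Equiv.mulRight b⁻¹)

lemma lrPerm_apply {G : Type*} [Group G] (a b g : G) : lrPerm a b g = a * g * b⁻¹ := rfl

lemma lrPerm_mul {G : Type*} [Group G] (a b a' b' : G) :
    lrPerm a b * lrPerm a' b' = lrPerm (a * a') (b * b') := by
  ext g; simp [lrPerm_apply, Equiv.Perm.mul_apply, mul_assoc]

lemma lrPerm_inv {G : Type*} [Group G] (a b : G) : (lrPerm a b)⁻¹ = lrPerm a⁻¹ b⁻¹ := by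
  ext g; simp [lrPerm, Equiv.Perm.inv_def, mul_assoc]

lemma lrPerm_one {G : Type*} [Group G] : (lrPerm (1 : G) 1) = 1 := by
  ext g; simp [lrPerm_apply]

/-- A copy of `Fin n` with no registered algebraic instances. -/
def GCopy (n : ℕ) : Type := Fin n

/-- The canonical identification of `Fin n` with its copy. -/
def finToGCopy (n : ℕ) : Fin n ≃ GCopy n := Equiv.refl (Fin n)

theorem stmt13 {G : Type*} [Group G] [Fintype G] (A B : Subgroup G)
    (hA : ∀ x ∈ A, ∀ y ∈ A, x * y = y * x) (hB : ∀ x ∈ B, ∀ y ∈ B, x * y = y * x)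
    (hAB : ∀ g : G, ∃ a ∈ A, ∃ b ∈ B, g = a * b)
    {F : Type*} [Field F] {n : ℕ} (hn : Fintype.card G = n)
    (C : Submodule F (Fin n → F)) (hC : IsGCode G C) :
    ∃ (G' : Type) (inst : CommGroup G'), @IsGCode F _ n G' inst.toGroup C := by
  classical
  obtain ⟨φ, hφ⟩ := hC
  -- the subgroup of permutations g ↦ a g b⁻¹
  set H : Subgroup (Equiv.Perm G) :=
    { carrier := {π | ∃ a ∈ A, ∃ b ∈ B, π = lrPerm a b}
      one_mem' := ⟨1, one_mem A, 1, one_mem B, lrPerm_one.symm⟩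
      mul_mem' := by
        rintro π π' ⟨a, ha, b, hb, rfl⟩ ⟨a', ha', b', hb', rfl⟩
        exact ⟨a * a', mul_mem ha ha', b * b', mul_mem hb hb', lrPerm_mul a b a' b'⟩
      inv_mem' := by
        rintro π ⟨a, ha, b, hb, rfl⟩
        exact ⟨a⁻¹, inv_mem ha, b⁻¹, inv_mem hb, lrPerm_inv a b⟩ } with hHdef
  have memH : ∀ π : Equiv.Perm G, π ∈ H ↔ ∃ a ∈ A, ∃ b ∈ B, π = lrPerm a b := fun π => Iff.rfl
  -- H stabilizes C (after transporting along φ)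
  have key : ∀ π : Equiv.Perm G, π ∈ H → ∀ x ∈ C,
      (fun i : Fin n => x (φ.symm (π (φ i)))) ∈ C := by
    intro π hπ x hx
    obtain ⟨a, ha, b, hb, rfl⟩ := (memH π).1 hπ
    have h1 := (hφ b⁻¹ x hx).2
    have h2 := (hφ a _ h1).1
    have : (fun i : Fin n => x (φ.symm (lrPerm a b (φ i))))
        = (fun i : Fin n => (fun j : Fin n => x (φ.symm (φ j * b⁻¹))) (φ.symm (a * φ i))) := by
      funext i; simp [lrPerm_apply, mul_assoc]
    rw [this]; exact h2
  -- evaluation at 1 is a bijection H ≃ G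
  have hinj : Function.Injective (fun π : H => (π : Equiv.Perm G) 1) := by
    rintro ⟨π, hπ⟩ ⟨π', hπ'⟩ h
    obtain ⟨a, ha, b, hb, rfl⟩ := (memH π).1 hπ
    obtain ⟨a', ha', b', hb', rfl⟩ := (memH π').1 hπ'
    simp only [lrPerm_apply, mul_one] at h
    have hc : a'⁻¹ * a = b'⁻¹ * b := by
      have := congrArg (fun x => a'⁻¹ * x * b) h
      simpa [mul_assoc] using this
    set c := a'⁻¹ * a with hcdef
    have hcA : c ∈ A := mul_mem (inv_mem ha') ha
    have hcB : c ∈ B := hc ▸ mul_mem (inv_mem hb') hb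
    have hac : a = a' * c := by rw [hcdef]; group
    have hbc : b = b' * c := by rw [hc]; group
    apply Subtype.ext
    ext g
    obtain ⟨a'', ha'', b'', hb'', rfl⟩ := hAB g
    have h1 : c * a'' = a'' * c := hA c hcA a'' ha''
    have h2' : c⁻¹ * b'' = b'' * c⁻¹ := by
      have h2 : Commute c b'' := hB c hcB b'' hb''
      exact h2.inv_left.eq
    show a * (a'' * b'') * b⁻¹ = a' * (a'' * b'') * b'⁻¹
    calc a * (a'' * b'') * b⁻¹
        = a' * (c * a'') * (b'' * c⁻¹) * b'⁻¹ := by rw [hac, hbc]; group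
      _ = a' * (a'' * c) * (c⁻¹ * b'' * b'⁻¹) := by rw [h1, ← h2']; group
      _ = a' * (a'' * b'') * b'⁻¹ := by group
  have hsurj : Function.Surjective (fun π : H => (π : Equiv.Perm G) 1) := by
    intro g
    obtain ⟨a, ha, b, hb, rfl⟩ := hAB g
    refine ⟨⟨lrPerm a b⁻¹, (memH _).2 ⟨a, ha, b⁻¹, inv_mem hb, rfl⟩⟩, ?_⟩
    simp [lrPerm_apply]
  let ev : H ≃ G := Equiv.ofBijective _ ⟨hinj, hsurj⟩
  let e : GCopy n ≃ H := ((finToGCopy n).symm.trans φ).trans ev.symm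
  have hev : ∀ i : GCopy n, ((e i : Equiv.Perm G)) 1 = φ ((finToGCopy n).symm i) := by
    intro i
    have : ev (e i) = φ ((finToGCopy n).symm i) := by simp [e]
    exact this
  -- commutativity of H
  letI instH : CommGroup H :=
    { (inferInstance : Group H) with
      mul_comm := by
        rintro ⟨π, hπ⟩ ⟨π', hπ'⟩
        obtain ⟨a, ha, b, hb, rfl⟩ := (memH π).1 hπ
        obtain ⟨a', ha', b', hb', rfl⟩ := (memH π').1 hπ'
        apply Subtype.ext
        show lrPerm a b * lrPerm a' b' = lrPerm a' b' * lrPerm a b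
        rw [lrPerm_mul, lrPerm_mul, hA a ha a' ha', hB b hb b' hb'] }
  letI instG' : CommGroup (GCopy n) := Equiv.commGroup e
  refine ⟨GCopy n, instG', finToGCopy n, ?_⟩
  have hmul : ∀ h i : GCopy n, h * i = e.symm (e h * e i) := by intro a b; with_unfolding_all rfl
  have hmulφ : ∀ (h i : GCopy n),
      φ ((finToGCopy n).symm (h * i)) = (e h : Equiv.Perm G) (φ ((finToGCopy n).symm i)) := by
    intro h i
    rw [hmul]
    have : φ ((finToGCopy n).symm (e.symm (e h * e i))) = ev (e h * e i) := by
      simp [e]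
    rw [this]
    show ((e h : Equiv.Perm G) * (e i : Equiv.Perm G)) 1 = _
    rw [Equiv.Perm.mul_apply, hev]
  intro h x hx
  have left : (fun i : Fin n => x ((finToGCopy n).symm (h * finToGCopy n i))) ∈ C := by
    have hk := key (e h : Equiv.Perm G) (e h).2 x hx
    have heq : (fun i : Fin n => x ((finToGCopy n).symm (h * finToGCopy n i)))
        = (fun i : Fin n => x (φ.symm ((e h : Equiv.Perm G) (φ i)))) := by
      funext i
      have := hmulφ h (finToGCopy n i)
      rw [Equiv.symm_apply_apply] at this
      rw [← φ.symm_apply_apply ((finToGCopy n).symm (h * finToGCopy n i)), this]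
    rw [heq]
    have heq2 : (fun i : Fin n => x (φ.symm ((e h : Equiv.Perm G) (φ i))))
        = (fun i : Fin n => x (φ.symm ((e h : Equiv.Perm G) (φ i)))) := rfl
    exact hk
  refine ⟨left, ?_⟩
  have hcomm : (fun i : Fin n => x ((finToGCopy n).symm (finToGCopy n i * h)))
      = (fun i : Fin n => x ((finToGCopy n).symm (h * finToGCopy n i))) := by
    funext i; rw [mul_comm]
  rw [hcomm]; exact left
end

section
/- Every metacyclic group code is an abelian group code: if G is a finite group with a cyclic normal subgroup N such that G/N is cyclic, then every G-code over any field is an abelian group code. -/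
section auxdefs

variable {G : Type*} [Group G] {n : ℕ}

def Tmap (φ : Fin n ≃ G) : G →* Equiv.Perm (Fin n) where
  toFun g := (φ.trans (Equiv.mulLeft g)).trans φ.symm
  map_one' := by ext i; simp
  map_mul' g h := by ext i; simp [mul_assoc]

def Rmap (φ : Fin n ≃ G) : G →* Equiv.Perm (Fin n) where
  toFun g := (φ.trans (Equiv.mulRight g⁻¹)).trans φ.symm
  map_one' := by ext i; simp
  map_mul' g h := by ext i; simp [mul_assoc]

lemma Tmap_apply (φ : Fin n ≃ G) (g : G) (i : Fin n) :
    Tmap φ g i = φ.symm (g * φ i) := rfl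

lemma Rmap_apply (φ : Fin n ≃ G) (g : G) (i : Fin n) :
    Rmap φ g i = φ.symm (φ i * g⁻¹) := rfl

lemma TRcomm (φ : Fin n ≃ G) (g h : G) : Commute (Tmap φ g) (Rmap φ h) := by
  apply Equiv.ext
  intro i
  simp [Tmap_apply, Rmap_apply, Equiv.Perm.mul_apply, mul_assoc]

def psiHom (φ : Fin n ≃ G) (a b : G) :
    Multiplicative ℤ × Multiplicative ℤ →* Equiv.Perm (Fin n) :=
  MonoidHom.noncommCoprod ((Tmap φ).comp (zpowersHom G a))
    ((Rmap φ).comp (zpowersHom G b)) (fun _ _ => TRcomm φ _ _)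

lemma psiHom_apply (φ : Fin n ≃ G) (a b : G) (p : Multiplicative ℤ × Multiplicative ℤ) :
    psiHom φ a b p = Tmap φ (a ^ p.1.toAdd) * Rmap φ (b ^ p.2.toAdd) := rfl

@[reducible]
def rangeCommGroup {M P : Type*} [CommGroup M] [Group P] (f : M →* P) :
    CommGroup f.range :=
  { (inferInstance : Group ↥f.range) with
    mul_comm := by
      rintro ⟨x, hx⟩ ⟨y, hy⟩
      obtain ⟨p, rfl⟩ := MonoidHom.mem_range.mp hx
      obtain ⟨q, rfl⟩ := MonoidHom.mem_range.mp hy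
      apply Subtype.ext
      show f p * f q = f q * f p
      rw [← map_mul, ← map_mul, mul_comm] }

end auxdefs

theorem stmt14 {G : Type*} [Group G] [Fintype G] (N : Subgroup G) (hNnormal : N.Normal)
    (hNcyc : IsCyclic (↥N)) (hQcyc : IsCyclic (G ⧸ N))
    {F : Type*} [Field F] {n : ℕ} (hn : Fintype.card G = n)
    (C : Submodule F (Fin n → F)) (hC : IsGCode G C) :
    ∃ (G' : Type) (inst : CommGroup G'), @IsGCode F _ n G' inst.toGroup C := by
  obtain ⟨φ, hφ⟩ := hC
  obtain ⟨na, hna⟩ := hNcyc.exists_generator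
  obtain ⟨q, hq⟩ := hQcyc.exists_generator
  obtain ⟨b, hb⟩ := QuotientGroup.mk_surjective q
  set a : G := (na : G) with ha
  -- every element of G decomposes as a^s * b^t
  have hdecomp : ∀ g : G, ∃ s t : ℤ, g = a ^ s * b ^ t := by
    intro g
    obtain ⟨t, ht⟩ := Subgroup.mem_zpowers_iff.mp (hq ((g : G) : G ⧸ N))
    have hmk : ((b ^ t : G) : G ⧸ N) = (g : G ⧸ N) := by
      rw [QuotientGroup.mk_zpow, hb, ht]
    have h1 : (b ^ t)⁻¹ * g ∈ N := QuotientGroup.eq.mp hmk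
    have h2 : g * (b ^ t)⁻¹ ∈ N := by
      have := hNnormal.conj_mem _ h1 (b ^ t)
      rwa [mul_inv_cancel_left] at this
    obtain ⟨s, hs⟩ := Subgroup.mem_zpowers_iff.mp (hna ⟨_, h2⟩)
    have hs' : a ^ s = g * (b ^ t)⁻¹ := by
      have := congrArg (Subtype.val) hs
      simpa [ha] using this
    exact ⟨s, t, by rw [hs', inv_mul_cancel_right]⟩
  set ψ := psiHom φ a b with hψ
  -- closure of C under all permutations in the range of ψ
  have hclosure : ∀ (p : Multiplicative ℤ × Multiplicative ℤ), ∀ x ∈ C,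
      (fun i => x (ψ p i)) ∈ C := by
    intro p x hx
    have h1 := (hφ (a ^ p.1.toAdd) x hx).1
    have h2 := (hφ ((b ^ p.2.toAdd)⁻¹) _ h1).2
    have heq : (fun i => x (ψ p i)) =
        (fun i => (fun i => x (φ.symm (a ^ p.1.toAdd * φ i)))
          (φ.symm (φ i * (b ^ p.2.toAdd)⁻¹))) := by
      funext i
      show x (ψ p i) = x (φ.symm (a ^ p.1.toAdd * φ (φ.symm (φ i * (b ^ p.2.toAdd)⁻¹))))
      rw [hψ, psiHom_apply]
      rfl
    rw [heq]
    exact h2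
  letI instG' : CommGroup ↥ψ.range := rangeCommGroup ψ
  set i₀ : Fin n := φ.symm 1 with hi₀
  have happly : ∀ (s t : ℤ),
      ψ (Multiplicative.ofAdd s, Multiplicative.ofAdd t) i₀ = φ.symm (a ^ s * b ^ (-t)) := by
    intro s t
    rw [hψ, psiHom_apply]
    show φ.symm (a ^ s * φ (φ.symm (φ i₀ * (b ^ t)⁻¹))) = φ.symm (a ^ s * b ^ (-t))
    rw [hi₀]
    simp [zpow_neg]
  have hsurj : ∀ j : Fin n, ∃ h : ↥ψ.range, h.1 i₀ = j := by
    intro j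
    obtain ⟨s, t, hg⟩ := hdecomp (φ j)
    refine ⟨⟨ψ (Multiplicative.ofAdd s, Multiplicative.ofAdd (-t)),
      MonoidHom.mem_range.mpr ⟨_, rfl⟩⟩, ?_⟩
    show ψ (Multiplicative.ofAdd s, Multiplicative.ofAdd (-t)) i₀ = j
    rw [happly, neg_neg, ← hg, Equiv.symm_apply_apply]
  have hinj : ∀ h1 h2 : ↥ψ.range, h1.1 i₀ = h2.1 i₀ → h1 = h2 := by
    intro h1 h2 hval
    set k := h2⁻¹ * h1 with hk
    have hk1 : k.1 = h2.1⁻¹ * h1.1 := rfl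
    have hfix : k.1 i₀ = i₀ := by
      rw [hk1, Equiv.Perm.mul_apply, hval]
      exact Equiv.symm_apply_apply _ _
    have hkid : ∀ j, k.1 j = j := by
      intro j
      obtain ⟨m, hm⟩ := hsurj j
      have h5 : k.1 (m.1 i₀) = m.1 (k.1 i₀) :=
        congrArg (fun z : ↥ψ.range => z.1 i₀) (mul_comm k m)
      rw [← hm, h5, hfix]
    have hone : k = 1 := Subtype.ext (Equiv.ext hkid)
    have := inv_mul_eq_one.mp (hk ▸ hone)
    exact this.symm
  set e : ↥ψ.range ≃ Fin n :=
    Equiv.ofBijective (fun h : ↥ψ.range => h.1 i₀)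
      ⟨fun h1 h2 hv => hinj h1 h2 hv, fun j => hsurj j⟩ with he
  refine ⟨↥ψ.range, instG', e.symm, ?_⟩
  intro g x hx
  have hkey : ∀ (g : ↥ψ.range) (i : Fin n), e (g * e.symm i) = g.1 i := by
    intro g i
    show g.1 ((e.symm i).1 i₀) = g.1 i
    congr 1
    exact e.apply_symm_apply i
  have hmem : (fun i => x (g.1 i)) ∈ C := by
    obtain ⟨gv, hgmem⟩ := g
    obtain ⟨p, rfl⟩ := MonoidHom.mem_range.mp hgmem
    exact hclosure p x hx
  have hc : ∀ i : Fin n, e.symm i * g = g * e.symm i := fun i => mul_comm _ _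
  constructor
  · simpa only [Equiv.symm_symm, hkey] using hmem
  · simp only [Equiv.symm_symm, hc]
    simpa only [hkey] using hmem
end

section
/- Let G be a finite group which is the product G = AB of two abelian subgroups A and B, realized as a regular subgroup of S_n (n = |G|), and let σ: G → C_{S_n}(G) be the standard anti-isomorphism. Then the subgroup K = ⟨A, σ(B)⟩ of S_n is an abelian regular subgroup of S_n. -/
theorem stmt15 {n : ℕ} (G : Subgroup (Equiv.Perm (Fin n))) (hG : IsRegularSubgroup G)
    (A B : Subgroup (Equiv.Perm (Fin n))) (hAG : A ≤ G) (hBG : B ≤ G)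
    (hA : ∀ x ∈ A, ∀ y ∈ A, x * y = y * x) (hB : ∀ x ∈ B, ∀ y ∈ B, x * y = y * x)
    (hAB : ∀ g ∈ G, ∃ a ∈ A, ∃ b ∈ B, g = a * b)
    (i0 : Fin n) (ψinv : Fin n → G) (hψ : ∀ i : Fin n, (ψinv i : Equiv.Perm (Fin n)) i0 = i)
    (σ : G → Equiv.Perm (Fin n))
    (hσ : ∀ (h : G) (i : Fin n),
      σ h i = (ψinv i : Equiv.Perm (Fin n)) ((h : Equiv.Perm (Fin n)) i0)) :
    (∀ x ∈ Subgroup.closure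
        ((A : Set (Equiv.Perm (Fin n))) ∪ σ '' {b : G | (b : Equiv.Perm (Fin n)) ∈ B}),
      ∀ y ∈ Subgroup.closure
        ((A : Set (Equiv.Perm (Fin n))) ∪ σ '' {b : G | (b : Equiv.Perm (Fin n)) ∈ B}),
        x * y = y * x) ∧
    IsRegularSubgroup (Subgroup.closure
      ((A : Set (Equiv.Perm (Fin n))) ∪ σ '' {b : G | (b : Equiv.Perm (Fin n)) ∈ B})) := by
  classical
  set S := (A : Set (Equiv.Perm (Fin n))) ∪ σ '' {b : G | (b : Equiv.Perm (Fin n)) ∈ B} with hS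
  -- the evaluation map on G is bijective
  have hsurjG : Function.Surjective (fun g : G => (g : Equiv.Perm (Fin n)) i0) :=
    fun j => ⟨ψinv j, hψ j⟩
  have hinjG : Function.Injective (fun g : G => (g : Equiv.Perm (Fin n)) i0) := by
    have hb : Function.Bijective (fun g : G => (g : Equiv.Perm (Fin n)) i0) :=
      (Nat.bijective_iff_surjective_and_card _).2 ⟨hsurjG, by
        rw [hG.2]; exact (Nat.card_eq_fintype_card.trans (Fintype.card_fin n)).symm⟩
    exact hb.1
  have hinj : ∀ g g' : G, (g : Equiv.Perm (Fin n)) i0 = (g' : Equiv.Perm (Fin n)) i0 → g = g' :=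
    fun g g' h => hinjG h
  -- σ h commutes with every element of G
  have hcommG : ∀ (h : G) (g : Equiv.Perm (Fin n)), g ∈ G → σ h * g = g * σ h := by
    intro h g hg
    ext i
    have key : ψinv (g i) = (⟨g, hg⟩ : G) * ψinv i := by
      apply hinj
      simp only [Subgroup.coe_mul, Equiv.Perm.mul_apply, hψ]
    simp only [Equiv.Perm.mul_apply, hσ, key, Subgroup.coe_mul]
  -- σ is an anti-homomorphism
  have hanti : ∀ h1 h2 : G, σ (h1 * h2) = σ h2 * σ h1 := by
    intro h1 h2
    ext i
    have key : ψinv ((ψinv i : Equiv.Perm (Fin n)) ((h1 : Equiv.Perm (Fin n)) i0)) =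
        ψinv i * h1 := by
      apply hinj
      simp [hψ, Subgroup.coe_mul, Equiv.Perm.mul_apply]
    simp only [hσ, Equiv.Perm.mul_apply]
    rw [key]
    simp [Subgroup.coe_mul, Equiv.Perm.mul_apply]
  -- generators pairwise commute
  have hgen : ∀ x ∈ S, ∀ y ∈ S, x * y = y * x := by
    rintro x (hx | ⟨b1, hb1, rfl⟩) y (hy | ⟨b2, hb2, rfl⟩)
    · exact hA x hx y hy
    · exact (hcommG b2 x (hAG hx)).symm
    · exact hcommG b1 y (hAG hy)
    · rw [← hanti, ← hanti]
      congr 1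
      exact Subtype.ext (hB _ hb2 _ hb1)
  -- the closure is abelian
  have hab : ∀ x ∈ Subgroup.closure S, ∀ y ∈ Subgroup.closure S, x * y = y * x := by
    intro x hx y hy
    induction hx, hy using Subgroup.closure_induction₂ with
    | mem a b ha hb => exact hgen a ha b hb
    | one_left a ha => exact (Commute.one_left a)
    | one_right a ha => exact (Commute.one_right a)
    | mul_left a b c ha hb hc h1 h2 => exact (Commute.mul_left h1 h2)
    | mul_right a b c ha hb hc h1 h2 => exact (Commute.mul_right h1 h2)
    | inv_left a b ha hb h1 => exact (Commute.inv_left h1)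
    | inv_right a b ha hb h1 => exact (Commute.inv_right h1)
  have horb : ∀ j : Fin n, ∃ k ∈ Subgroup.closure S, k i0 = j := by
    intro j
    obtain ⟨a, ha, b, hb, hab'⟩ := hAB (ψinv j : Equiv.Perm (Fin n)) (ψinv j).2
    have hbG : (⟨b, hBG hb⟩ : G) ∈ {b : G | (b : Equiv.Perm (Fin n)) ∈ B} := hb
    refine ⟨a * σ ⟨b, hBG hb⟩, ?_, ?_⟩
    · exact mul_mem (Subgroup.subset_closure (Or.inl ha))
        (Subgroup.subset_closure (Or.inr ⟨_, hbG, rfl⟩))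
    · have h1 : ψinv i0 = (1 : G) := by
        apply hinj; simp [hψ]
      have hbi : σ (⟨b, hBG hb⟩ : G) i0 = b i0 := by
        rw [hσ, h1]; rfl
      calc (a * σ ⟨b, hBG hb⟩) i0 = a (σ (⟨b, hBG hb⟩ : G) i0) := rfl
        _ = a (b i0) := by rw [hbi]
        _ = (a * b) i0 := rfl
        _ = (ψinv j : Equiv.Perm (Fin n)) i0 := by rw [← hab']
        _ = j := hψ j
  have hfree : ∀ c ∈ Subgroup.closure S, c i0 = i0 → c = 1 := by
    intro c hc hci
    apply Equiv.ext
    intro j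
    obtain ⟨u, hu, huj⟩ := horb j
    have hcu := hab c hc u hu
    have h2 : c (u i0) = u i0 := by
      calc c (u i0) = (c * u) i0 := rfl
        _ = (u * c) i0 := by rw [hcu]
        _ = u (c i0) := rfl
        _ = u i0 := by rw [hci]
    rw [← huj]
    simpa using h2
  refine ⟨hab, ?_, ?_⟩
  · intro i j
    obtain ⟨k, hk, hki⟩ := horb i
    obtain ⟨k', hk', hkj⟩ := horb j
    refine ⟨k' * k⁻¹, mul_mem hk' (inv_mem hk), ?_⟩
    rw [← hki]
    simp [hkj]
  · have hbij : Function.Bijective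
        (fun k : Subgroup.closure S => (k : Equiv.Perm (Fin n)) i0) := by
      constructor
      · intro k k' h
        have h1 : (k : Equiv.Perm (Fin n))⁻¹ * k' = 1 := by
          apply hfree _ (mul_mem (inv_mem k.2) k'.2)
          have h' : (k : Equiv.Perm (Fin n)) i0 = (k' : Equiv.Perm (Fin n)) i0 := h
          simp only [Equiv.Perm.mul_apply]
          rw [← h']
          simp
        apply Subtype.ext
        have := congrArg (fun z => (k : Equiv.Perm (Fin n)) * z) h1
        simpa [mul_assoc] using this.symm
      · intro j
        obtain ⟨k, hk, hkj⟩ := horb j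
        exact ⟨⟨k, hk⟩, hkj⟩
    have := Nat.card_eq_of_bijective _ hbij
    simpa using this
end

section
/- Let F_q have characteristic p, let C ⊆ F_q^q be a Cauchy code of length q and dimension k with 2 ≤ k ≤ q−2, and suppose C is a left G-code for a group G of order q. Then G is elementary abelian of exponent p and the scaling map of C (with location set F_q) is constant, i.e., C is permutation equivalent to the parity check extended narrow sense Reed-Solomon code. -/
/-- Homogeneous coordinates of a point of the projective line `F ∪ {∞}`:
`x ↦ (x, 1)` and `∞ ↦ (1, 0)`. -/
def coordFn {F : Type*} [Field F] : Option F → Fin 2 → F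
  | some x => ![x, 1]
  | none => ![1, 0]

/-- Evaluation of the homogeneous polynomial of degree `k - 1` with coefficients `c`
(namely `∑ j, c j • X^j Y^(k-1-j)`) at the pair `w`. -/
def evalHomog {F : Type*} [Field F] (k : ℕ) (c : Fin k → F) (w : Fin 2 → F) : F :=
  ∑ j : Fin k, c j * w 0 ^ (j : ℕ) * w 1 ^ (k - 1 - (j : ℕ))

/-- The `k`-dimensional Cauchy code with location vector `α` (a vector of distinct points of
the projective line `F ∪ {∞}`) and scaling values `f i` at the point `α i`. -/
def CauchyCode (F : Type*) [Field F] (n k : ℕ) (α : Fin n → Option F) (f : Fin n → F) :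
    Submodule F (Fin n → F) where
  carrier := {x | ∃ c : Fin k → F, ∀ i, x i = f i * evalHomog k c (coordFn (α i))}
  add_mem' := by
    rintro x y ⟨c, hc⟩ ⟨d, hd⟩
    exact ⟨c + d, by intro i; simp [evalHomog, hc i, hd i, Finset.sum_add_distrib,
      mul_add, add_mul]⟩
  zero_mem' := ⟨0, by intro i; simp [evalHomog]⟩
  smul_mem' := by
    rintro a x ⟨c, hc⟩
    refine ⟨a • c, fun i => ?_⟩
    simp [evalHomog, hc i, Finset.mul_sum, mul_assoc, mul_left_comm]


open Polynomial Finset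


section Aux

variable {F : Type*} [Field F] [Fintype F]

private lemma powsum_zero_lt (s : ℕ) (hs : s < Fintype.card F - 1) : ∑ z : F, z ^ s = 0 :=
  FiniteField.sum_pow_lt_card_sub_one F s hs

private lemma powsum_top (h2 : 1 < Fintype.card F) :
    ∑ z : F, z ^ (Fintype.card F - 1) = -1 := by
  classical
  have h : ∀ z : F, z ^ (Fintype.card F - 1) = 1 - (if z = 0 then 1 else 0) := by
    intro z
    by_cases hz : z = 0
    · simp [hz, zero_pow, Nat.sub_ne_zero_of_lt h2]
    · simp [hz, FiniteField.pow_card_sub_one_eq_one z hz]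
  rw [Finset.sum_congr rfl (fun z _ => h z), Finset.sum_sub_distrib,
    Finset.sum_ite_eq' Finset.univ (0 : F) (fun _ => (1 : F))]
  simp [FiniteField.cast_card_eq_zero]

private lemma powsum_mid (s : ℕ) (h1 : Fintype.card F - 1 < s)
    (h2 : s < 2 * (Fintype.card F - 1)) : ∑ z : F, z ^ s = 0 := by
  have h : ∀ z : F, z ^ s = z ^ (s - (Fintype.card F - 1)) := by
    intro z
    by_cases hz : z = 0
    · rw [hz, zero_pow (by omega), zero_pow (by omega)]
    · have h3 : z ^ s = z ^ (s - (Fintype.card F - 1)) * z ^ (Fintype.card F - 1) := by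
        rw [← pow_add]; congr 1; omega
      rw [h3, FiniteField.pow_card_sub_one_eq_one z hz, mul_one]
  rw [Finset.sum_congr rfl (fun z _ => h z)]
  exact powsum_zero_lt _ (by omega)

private lemma powsum_ne (s : ℕ) (hs : s ≠ Fintype.card F - 1)
    (h2 : s < 2 * (Fintype.card F - 1)) : ∑ z : F, z ^ s = 0 := by
  rcases Nat.lt_or_ge s (Fintype.card F - 1) with h | h
  · exact powsum_zero_lt s h
  · exact powsum_mid s (by omega) h2

private lemma poly_eq_of_eval_eq {P Q : F[X]} (hP : P.natDegree < Fintype.card F)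
    (hQ : Q.natDegree < Fintype.card F) (h : ∀ z : F, P.eval z = Q.eval z) : P = Q := by
  have h0 := Polynomial.eq_zero_of_natDegree_lt_card_of_eval_eq_zero (P - Q)
    (Function.injective_id (α := F)) (fun z => by simp [h z])
    (lt_of_le_of_lt (Polynomial.natDegree_sub_le P Q) (max_lt hP hQ))
  exact sub_eq_zero.mp h0

private lemma natDeg_lt {P : F[X]} {k : ℕ} (hk : 0 < k) (h : P.degree < (k : ℕ)) :
    P.natDegree < k := by
  rcases eq_or_ne P 0 with rfl | hP
  · simpa using hk
  · exact (Polynomial.natDegree_lt_iff_degree_lt hP).2 h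

private lemma coeff_poly_iff {q k : ℕ} (hk : 0 < k) (b g x : Fin q → F) :
    (∃ c : Fin k → F, ∀ i, x i = g i * ∑ j : Fin k, c j * b i ^ (j : ℕ)) ↔
      ∃ P : F[X], P.degree < (k : ℕ) ∧ ∀ i, x i = g i * P.eval (b i) := by
  constructor
  · rintro ⟨c, hc⟩
    refine ⟨∑ j : Fin k, C (c j) * X ^ (j : ℕ), ?_, fun i => ?_⟩
    · refine lt_of_le_of_lt (Polynomial.degree_sum_le _ _)
        ((Finset.sup_lt_iff (WithBot.bot_lt_coe k)).mpr fun j _ => ?_)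
      refine lt_of_le_of_lt (Polynomial.degree_C_mul_X_pow_le _ _) ?_
      exact WithBot.coe_lt_coe.2 j.isLt
    · rw [hc i]; congr 1
      rw [Polynomial.eval_finset_sum]; simp
  · rintro ⟨P, hdeg, hP⟩
    refine ⟨fun j => P.coeff j, fun i => ?_⟩
    rw [hP i]; congr 1
    rw [Polynomial.eval_eq_sum_range' (natDeg_lt hk hdeg)]
    exact (Fin.sum_univ_eq_sum_range _ k).symm




variable {F : Type*} [Field F] [Fintype F]

private lemma natDeg_lt' {P : F[X]} {k : ℕ} (hk : 0 < k) (h : P.degree < (k : ℕ)) :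
    P.natDegree < k := by
  rcases eq_or_ne P 0 with rfl | hP
  · simpa using hk
  · exact (Polynomial.natDegree_lt_iff_degree_lt hP).2 h

/-- membership in the affine GRS code with points `β`, multipliers `g`, dimension `k`. -/
private def PMem {F : Type*} [Field F] {q : ℕ} (k : ℕ) (β g : Fin q → F)
    (x : Fin q → F) : Prop :=
  ∃ P : F[X], P.degree < (k : ℕ) ∧ ∀ i, x i = g i * P.eval (β i)

private lemma pair_zero {q k : ℕ} (hq : q = Fintype.card F) (hk1 : 1 ≤ k) (hkq : k + 1 ≤ q)
    (β g : Fin q → F) (hβ : Function.Bijective β) (hg : ∀ i, g i ≠ 0)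
    {x y : Fin q → F} (hx : PMem k β g x) (hy : PMem (q - k) β (fun i => (g i)⁻¹) y) :
    ∑ i, x i * y i = 0 := by
  obtain ⟨P, hPd, hP⟩ := hx
  obtain ⟨Q, hQd, hQ⟩ := hy
  have key : ∀ i, x i * y i = (P * Q).eval (β i) := by
    intro i
    rw [hP i, hQ i, Polynomial.eval_mul]
    field_simp [hg i]
  rw [Finset.sum_congr rfl fun i _ => key i,
    Fintype.sum_bijective β hβ _ (fun z => (P * Q).eval z) (fun i => rfl)]
  have hnd : (P * Q).natDegree < q - 1 := by
    have h1 : P.natDegree < k := natDeg_lt' (by omega) hPd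
    have h2 : Q.natDegree < q - k := natDeg_lt' (by omega) hQd
    have h3 := Polynomial.natDegree_mul_le (p := P) (q := Q)
    omega
  rw [Finset.sum_congr rfl fun z _ => Polynomial.eval_eq_sum_range' hnd z, Finset.sum_comm]
  refine Finset.sum_eq_zero fun m hm => ?_
  rw [← Finset.mul_sum, powsum_zero_lt m (by rw [← hq]; exact Finset.mem_range.mp hm), mul_zero]

private lemma dual_of_pair {q k : ℕ} (hq : q = Fintype.card F) (hk1 : 1 ≤ k) (hkq : k + 1 ≤ q)
    (β g : Fin q → F) (hβ : Function.Bijective β) (hg : ∀ i, g i ≠ 0)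
    {y : Fin q → F} (hy : ∀ x, PMem k β g x → ∑ i, x i * y i = 0) :
    PMem (q - k) β (fun i => (g i)⁻¹) y := by
  classical
  have hβinj : Set.InjOn β ↑(Finset.univ : Finset (Fin q)) := Function.Injective.injOn hβ.1
  have hcards : (Finset.univ : Finset (Fin q)).card = q := by simp
  set R : F[X] := Lagrange.interpolate Finset.univ β (fun i => g i * y i) with hRdef
  have hRdeg : R.degree < (q : ℕ) := by
    have h := Lagrange.degree_interpolate_lt (v := β) (s := Finset.univ)
      (fun i => g i * y i) hβinj
    rwa [hcards] at h
  have hRnd : R.natDegree < q := natDeg_lt' (by omega) hRdeg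
  have hnode : ∀ i, R.eval (β i) = g i * y i := fun i =>
    Lagrange.eval_interpolate_at_node _ hβinj (Finset.mem_univ i)
  have h0 : ∀ m, m < k → R.coeff (q - 1 - m) = 0 := by
    intro m hm
    have hxmem : PMem k β g (fun i => g i * β i ^ m) := by
      refine ⟨X ^ m, ?_, fun i => by simp⟩
      rw [Polynomial.degree_X_pow]
      exact WithBot.coe_lt_coe.2 hm
    have hsum := hy _ hxmem
    have step1 : ∀ i : Fin q, (g i * β i ^ m) * y i = β i ^ m * R.eval (β i) := by
      intro i; rw [hnode i]; ring
    rw [Finset.sum_congr rfl fun i _ => step1 i,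
      Fintype.sum_bijective β hβ _ (fun z => z ^ m * R.eval z) (fun i => rfl)] at hsum
    have expand : ∀ z : F, z ^ m * R.eval z =
        ∑ j ∈ Finset.range q, R.coeff j * z ^ (m + j) := by
      intro z
      rw [Polynomial.eval_eq_sum_range' hRnd, Finset.mul_sum]
      refine Finset.sum_congr rfl fun j _ => ?_
      rw [pow_add]; ring
    rw [Finset.sum_congr rfl fun z _ => expand z, Finset.sum_comm] at hsum
    have hsum2 : ∀ j ∈ Finset.range q, j ≠ q - 1 - m →
        (∑ z : F, R.coeff j * z ^ (m + j)) = 0 := by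
      intro j hj hjne
      rw [← Finset.mul_sum, powsum_ne (m + j) (by rw [← hq]; omega)
        (by rw [← hq]; have := Finset.mem_range.mp hj; omega), mul_zero]
    rw [Finset.sum_eq_single_of_mem (q - 1 - m)
      (Finset.mem_range.mpr (by omega)) hsum2] at hsum
    rw [← Finset.mul_sum] at hsum
    have hmj : m + (q - 1 - m) = q - 1 := by omega
    have hqc : (∑ z : F, z ^ (q - 1)) = -1 := by
      rw [hq]; exact powsum_top (by omega)
    rw [hmj, hqc] at hsum
    simpa using hsum
  have hRdeg2 : R.degree < ((q - k : ℕ) : WithBot ℕ) := by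
    rw [Polynomial.degree_lt_iff_coeff_zero]
    intro m hm
    rcases Nat.lt_or_ge m q with hmq | hmq
    · have heq : m = q - 1 - (q - 1 - m) := by omega
      rw [heq]
      exact h0 _ (by omega)
    · exact Polynomial.coeff_eq_zero_of_natDegree_lt (by omega)
  refine ⟨R, hRdeg2, fun i => ?_⟩
  show y i = (g i)⁻¹ * R.eval (β i)
  rw [hnode i, inv_mul_cancel_left₀ (hg i)]

private lemma poly_eq_of_eval_eq_fin {q : ℕ} (hq : q = Fintype.card F)
    {P Q : F[X]} (hP : P.natDegree < q) (hQ : Q.natDegree < q)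
    (β : Fin q → F) (hβ : Function.Bijective β)
    (h : ∀ i : Fin q, P.eval (β i) = Q.eval (β i)) : P = Q := by
  refine poly_eq_of_eval_eq (by omega) (by omega) fun z => ?_
  obtain ⟨i, rfl⟩ := hβ.2 z
  exact h i

private lemma aut_affine {q k : ℕ} (hq : q = Fintype.card F) (hk2 : 2 ≤ k) (hkq : k + 2 ≤ q)
    (β g : Fin q → F) (hβ : Function.Bijective β) (hg : ∀ i, g i ≠ 0)
    (τ : Equiv.Perm (Fin q))
    (hM : ∀ x, PMem k β g x → PMem k β g (fun i => x (τ i)))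
    (hD : ∀ y, PMem (q - k) β (fun i => (g i)⁻¹) y →
      PMem (q - k) β (fun i => (g i)⁻¹) (fun i => y (τ i))) :
    ∃ u v c : F, u ≠ 0 ∧ c ≠ 0 ∧ (∀ i, β (τ i) = u * β i + v) ∧ ∀ i, g (τ i) = c * g i := by
  have hq4 : 4 ≤ q := by omega
  have hcast : ∀ m n : ℕ, m < n → ((m : ℕ) : WithBot ℕ) < ((n : ℕ) : WithBot ℕ) :=
    fun m n h => WithBot.coe_lt_coe.2 h
  have hdeg0k : (0 : WithBot ℕ) < ((k : ℕ) : WithBot ℕ) := by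
    have := hcast 0 k (by omega); simpa using this
  have hdeg0qk : (0 : WithBot ℕ) < (((q - k : ℕ)) : WithBot ℕ) := by
    have := hcast 0 (q - k) (by omega); simpa using this
  have memg : PMem k β g g := ⟨1, by rw [Polynomial.degree_one]; exact hdeg0k,
    fun i => by simp⟩
  have memginv : PMem (q - k) β (fun i => (g i)⁻¹) (fun i => (g i)⁻¹) :=
    ⟨1, by rw [Polynomial.degree_one]; exact hdeg0qk, fun i => by simp⟩
  obtain ⟨P₁, hP₁d, hP₁⟩ := hM _ memg
  obtain ⟨Q₁, hQ₁d, hQ₁⟩ := hD _ memginv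
  have hPQ : ∀ i : Fin q, P₁.eval (β i) * Q₁.eval (β i) = 1 := by
    intro i
    have h1 := hP₁ i
    have h2 := hQ₁ i
    simp only at h1 h2
    have h3 : g (τ i) * (g (τ i))⁻¹ = (g i * P₁.eval (β i)) * ((g i)⁻¹ * Q₁.eval (β i)) := by
      rw [← h1, ← h2]
    rw [mul_inv_cancel₀ (hg (τ i))] at h3
    rw [mul_mul_mul_comm, mul_inv_cancel₀ (hg i), one_mul] at h3
    exact h3.symm
  have hP₁Q₁ : P₁ * Q₁ = 1 := by
    refine poly_eq_of_eval_eq_fin hq ?_ ?_ β hβ fun i => ?_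
    · have h1 : P₁.natDegree < k := natDeg_lt' (by omega) hP₁d
      have h2 : Q₁.natDegree < q - k := natDeg_lt' (by omega) hQ₁d
      have h3 := Polynomial.natDegree_mul_le (p := P₁) (q := Q₁)
      omega
    · rw [Polynomial.natDegree_one]; omega
    · rw [Polynomial.eval_mul, Polynomial.eval_one]; exact hPQ i
  have hP₁ne : P₁ ≠ 0 := fun h => by simp [h] at hP₁Q₁
  have hQ₁ne : Q₁ ≠ 0 := fun h => by simp [h] at hP₁Q₁
  have hndP₁ : P₁.natDegree = 0 := by
    have h4 := Polynomial.natDegree_mul hP₁ne hQ₁ne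
    rw [hP₁Q₁, Polynomial.natDegree_one] at h4
    omega
  obtain ⟨c, hc⟩ := Polynomial.natDegree_eq_zero.mp hndP₁
  have hc0 : c ≠ 0 := fun h => hP₁ne (by rw [← hc, h, map_zero])
  have hgg : ∀ i, g (τ i) = c * g i := by
    intro i
    have h1 := hP₁ i
    simp only at h1
    rw [h1, ← hc, Polynomial.eval_C]; ring
  have memX : PMem k β g (fun i => g i * β i) :=
    ⟨Polynomial.X, by rw [Polynomial.degree_X]; exact_mod_cast hcast 1 k (by omega),
      fun i => by simp⟩
  have memDX : PMem (q - k) β (fun i => (g i)⁻¹) (fun i => (g i)⁻¹ * β i) :=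
    ⟨Polynomial.X, by rw [Polynomial.degree_X]; exact_mod_cast hcast 1 (q - k) (by omega),
      fun i => by simp⟩
  obtain ⟨S₀, hS₀d, hS₀⟩ := hM _ memX
  obtain ⟨S₁, hS₁d, hS₁⟩ := hD _ memDX
  set S : F[X] := Polynomial.C c⁻¹ * S₀ with hSdef
  have hSd : S.degree < ((k : ℕ) : WithBot ℕ) := by
    rw [hSdef, Polynomial.degree_C_mul (inv_ne_zero hc0)]; exact hS₀d
  have hS : ∀ i, β (τ i) = S.eval (β i) := by
    intro i
    have h1 := hS₀ i
    simp only at h1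
    rw [hgg i] at h1
    rw [hSdef]
    simp only [Polynomial.eval_mul, Polynomial.eval_C]
    have h2 : c * (g i * β (τ i)) = c * (g i * (c⁻¹ * S₀.eval (β i))) := by
      field_simp
      linear_combination h1
    have h3 := mul_left_cancel₀ hc0 h2
    exact mul_left_cancel₀ (hg i) h3
  have hS' : ∀ i, β (τ i) = (Polynomial.C c * S₁).eval (β i) := by
    intro i
    have h1 := hS₁ i
    simp only at h1
    rw [hgg i, mul_inv] at h1
    simp only [Polynomial.eval_mul, Polynomial.eval_C]
    have h2 : (g i)⁻¹ * (c⁻¹ * β (τ i)) = (g i)⁻¹ * (c⁻¹ * (c * S₁.eval (β i))) := by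
      rw [inv_mul_cancel_left₀ hc0]
      linear_combination h1
    have h3 := mul_left_cancel₀ (inv_ne_zero (hg i)) h2
    have h4 := mul_left_cancel₀ (inv_ne_zero hc0) h3
    rw [h4]
  have hSnd : S.natDegree < k := natDeg_lt' (by omega) hSd
  have hSnd2 : S.natDegree < q - k := by
    have hSeq : S = Polynomial.C c * S₁ := by
      refine poly_eq_of_eval_eq_fin hq (by omega) ?_ β hβ
        (fun i => by rw [← hS i, ← hS' i])
      have h2 : S₁.natDegree < q - k := natDeg_lt' (by omega) hS₁d
      rw [Polynomial.natDegree_C_mul hc0]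
      omega
    rw [hSeq, Polynomial.natDegree_C_mul hc0]
    exact natDeg_lt' (by omega) hS₁d
  have he1 : S.natDegree ≤ 1 := by
    by_contra he
    push_neg at he
    set e := S.natDegree with hedef
    have he2 : 2 ≤ e := he
    have hk3 : 3 ≤ k := by omega
    set j := (k - 1) / e + 1 with hjdef
    have hjmul : j * e = (k - 1) / e * e + e := by rw [hjdef, add_mul, one_mul]
    have hje1 : k ≤ j * e := by
      have h := Nat.lt_div_mul_add (a := k - 1) (b := e) (by omega)
      rw [← hjmul] at h
      omega
    have hje2 : j * e ≤ k - 1 + e := by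
      have h := Nat.div_mul_le_self (k - 1) e
      rw [hjmul]
      omega
    have hje3 : j * e ≤ q - 2 := by omega
    have hjk : j < k := by
      have h1 : (k - 1) / e ≤ (k - 1) / 2 := Nat.div_le_div_left he2 (by omega)
      have h2 : (k - 1) / 2 + 1 ≤ k - 1 := by omega
      omega
    have memXj : PMem k β g (fun i => g i * β i ^ j) :=
      ⟨Polynomial.X ^ j, by rw [Polynomial.degree_X_pow]; exact hcast j k hjk,
        fun i => by simp⟩
    obtain ⟨Rp, hRpd, hRp⟩ := hM _ memXj
    have hkey : Polynomial.C c * S ^ j = Rp := by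
      refine poly_eq_of_eval_eq_fin hq ?_ ?_ β hβ fun i => ?_
      · rw [Polynomial.natDegree_C_mul hc0, Polynomial.natDegree_pow, ← hedef]
        omega
      · have := natDeg_lt' (by omega : 0 < k) hRpd
        omega
      · have h1 := hRp i
        simp only at h1
        rw [hgg i, hS i] at h1
        simp only [Polynomial.eval_mul, Polynomial.eval_C, Polynomial.eval_pow]
        have h2 : g i * (c * S.eval (β i) ^ j) = g i * Rp.eval (β i) := by
          linear_combination h1
        exact mul_left_cancel₀ (hg i) h2
    have hcontra : Rp.natDegree = j * e := by
      rw [← hkey, Polynomial.natDegree_C_mul hc0, Polynomial.natDegree_pow, ← hedef]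
    have := natDeg_lt' (by omega : 0 < k) hRpd
    omega
  refine ⟨S.coeff 1, S.coeff 0, c, ?_, hc0, ?_, hgg⟩
  case refine_2 =>
    intro i
    rw [hS i]
    conv_lhs => rw [Polynomial.eq_X_add_C_of_degree_le_one
      (Polynomial.natDegree_le_iff_degree_le.mp he1)]
    simp
  case refine_1 =>
    intro hu
    have hconst : ∀ i, β (τ i) = S.coeff 0 := by
      intro i
      rw [hS i]
      conv_lhs => rw [Polynomial.eq_X_add_C_of_degree_le_one
        (Polynomial.natDegree_le_iff_degree_le.mp he1)]
      simp [hu]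
    have hi01 : (⟨0, by omega⟩ : Fin q) = ⟨1, by omega⟩ := by
      have h0 := hconst ⟨0, by omega⟩
      have h1 := hconst ⟨1, by omega⟩
      have := hβ.1 (h0.trans h1.symm)
      exact τ.injective this
    simp at hi01

private lemma degree_lt_of_natDegree_lt {P : F[X]} {k : ℕ} (h : P.natDegree < k) :
    P.degree < (k : ℕ) :=
  lt_of_le_of_lt Polynomial.degree_le_natDegree (WithBot.coe_lt_coe.2 h)

private lemma evalHomog_some (k : ℕ) (c : Fin k → F) (b : F) :
    evalHomog k c (coordFn (some b)) = ∑ j : Fin k, c j * b ^ (j : ℕ) := by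
  unfold evalHomog coordFn
  refine Finset.sum_congr rfl fun j _ => ?_
  simp

private lemma evalHomog_none (k : ℕ) (hk : 0 < k) (c : Fin k → F) :
    evalHomog k c (coordFn none) = c ⟨k - 1, by omega⟩ := by
  unfold evalHomog coordFn
  rw [Finset.sum_eq_single (⟨k - 1, by omega⟩ : Fin k)]
  · simp
  · intro j _ hj
    have hjlt : (j : ℕ) < k - 1 := by
      rcases Nat.lt_or_ge (j : ℕ) (k - 1) with h | h
      · exact h
      · exfalso
        apply hj
        apply Fin.ext
        have := j.isLt
        simp only
        omega
    simp only [Matrix.cons_val_one, Matrix.head_cons, Matrix.cons_val_zero, one_pow, mul_one]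
    rw [zero_pow (by omega : k - 1 - (j : ℕ) ≠ 0)]
    ring
  · intro h; exact absurd (Finset.mem_univ _) h

private lemma affine_form {q k : ℕ} (hq : q = Fintype.card F) (hk1 : 0 < k)
    (α : Fin q → Option F) (hα : Function.Injective α)
    (f : Fin q → F) (hf : ∀ i, f i ≠ 0) :
    ∃ β g : Fin q → F, Function.Bijective β ∧ (∀ i, g i ≠ 0) ∧
      ∀ x : Fin q → F,
        (∃ c : Fin k → F, ∀ i, x i = f i * evalHomog k c (coordFn (α i))) ↔ PMem k β g x := by
  classical
  by_cases hnone : ∀ i, α i ≠ none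
  · -- Case A : all locations finite
    have hsome : ∀ i, ∃ a, α i = some a := by
      intro i
      cases hai : α i with
      | none => exact absurd hai (hnone i)
      | some a => exact ⟨a, rfl⟩
    set b : Fin q → F := fun i => (α i).getD 0 with hb
    have hab : ∀ i, α i = some (b i) := by
      intro i
      obtain ⟨a, ha⟩ := hsome i
      rw [ha]
      simp [hb, ha]
    have hbinj : Function.Injective b := by
      intro i j hij
      apply hα
      rw [hab i, hab j, hij]
    have hbbij : Function.Bijective b :=
      (Fintype.bijective_iff_injective_and_card b).mpr ⟨hbinj, by simp [← hq]⟩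
    refine ⟨b, f, hbbij, hf, fun x => ?_⟩
    unfold PMem
    rw [← coeff_poly_iff hk1]
    constructor
    · rintro ⟨c, hc⟩
      exact ⟨c, fun i => by rw [hc i, hab i, evalHomog_some]⟩
    · rintro ⟨c, hc⟩
      exact ⟨c, fun i => by rw [hc i, hab i, evalHomog_some]⟩
  · -- Case B : ∞ is a location; find the missing finite point a₀
    push_neg at hnone
    obtain ⟨i₀, hi₀⟩ := hnone
    have hmiss : ∃ a₀ : F, ∀ i, α i ≠ some a₀ := by
      by_contra h
      push_neg at h
      choose ψ hψ using h
      have hsec : ∀ o : Option F, α (Option.elim o i₀ ψ) = o := by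
        intro o
        cases o with
        | none => exact hi₀
        | some a => exact hψ a
      have hinj : Function.Injective (fun o : Option F => Option.elim o i₀ ψ) := by
        intro o₁ o₂ h12
        rw [← hsec o₁, ← hsec o₂]
        simp only at h12
        rw [h12]
      have hcard := Fintype.card_le_of_injective _ hinj
      rw [Fintype.card_option, Fintype.card_fin, ← hq] at hcard
      omega
    obtain ⟨a₀, ha₀⟩ := hmiss
    set β : Fin q → F := fun i => (α i).elim 0 (fun t => (t - a₀)⁻¹) with hβdef
    set g : Fin q → F := fun i => (α i).elim (f i) (fun t => f i * (t - a₀) ^ (k - 1))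
      with hgdef
    have hsub : ∀ {i : Fin q} {t : F}, α i = some t → t - a₀ ≠ 0 := by
      intro i t hit
      have : t ≠ a₀ := fun h => ha₀ i (by rw [hit, h])
      exact sub_ne_zero_of_ne this
    have hβs : ∀ {i : Fin q} {t : F}, α i = some t → β i = (t - a₀)⁻¹ := by
      intro i t hit; rw [hβdef]; simp [hit]
    have hβn : ∀ {i : Fin q}, α i = none → β i = 0 := by
      intro i hit; rw [hβdef]; simp [hit]
    have hgs : ∀ {i : Fin q} {t : F}, α i = some t → g i = f i * (t - a₀) ^ (k - 1) := by
      intro i t hit; rw [hgdef]; simp [hit]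
    have hgn : ∀ {i : Fin q}, α i = none → g i = f i := by
      intro i hit; rw [hgdef]; simp [hit]
    have hg0 : ∀ i, g i ≠ 0 := by
      intro i
      cases hai : α i with
      | none => rw [hgn hai]; exact hf i
      | some t =>
        rw [hgs hai]
        exact mul_ne_zero (hf i) (pow_ne_zero _ (hsub hai))
    have hβinj : Function.Injective β := by
      intro i j hij
      cases hai : α i with
      | none =>
        cases haj : α j with
        | none => exact hα (by rw [hai, haj])
        | some s =>
          rw [hβn hai, hβs haj] at hij
          exact absurd hij.symm (inv_ne_zero (hsub haj))
      | some t =>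
        cases haj : α j with
        | none =>
          rw [hβs hai, hβn haj] at hij
          exact absurd hij (inv_ne_zero (hsub hai))
        | some s =>
          rw [hβs hai, hβs haj] at hij
          have := inv_injective hij
          have hts : t = s := by
            have h2 : t - a₀ = s - a₀ := this
            linear_combination h2
          exact hα (by rw [hai, haj, hts])
    have hβbij : Function.Bijective β :=
      (Fintype.bijective_iff_injective_and_card β).mpr ⟨hβinj, by simp [← hq]⟩
    refine ⟨β, g, hβbij, hg0, fun x => ?_⟩
    constructor
    · -- forward: Cauchy membership → affine polynomial membership
      rintro ⟨c, hc⟩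
      set L : F[X] := Polynomial.C a₀ * Polynomial.X + 1 with hLdef
      have hLnd : L.natDegree ≤ 1 := by
        rw [hLdef]
        refine le_trans (Polynomial.natDegree_add_le _ _) ?_
        simp only [Polynomial.natDegree_one]
        refine max_le (le_trans (Polynomial.natDegree_mul_le) ?_) (by omega)
        simp [Polynomial.natDegree_C, Polynomial.natDegree_X]
      set P : F[X] :=
        ∑ m : Fin k, Polynomial.C (c m) * (L ^ (m : ℕ) * Polynomial.X ^ (k - 1 - (m : ℕ)))
        with hPdef
      have hPnd : P.natDegree ≤ k - 1 := by
        rw [hPdef]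
        refine Polynomial.natDegree_sum_le_of_forall_le _ _ fun m _ => ?_
        refine le_trans (Polynomial.natDegree_mul_le) ?_
        rw [Polynomial.natDegree_C]
        refine le_trans (by omega : 0 + (Polynomial.natDegree
          (L ^ (m : ℕ) * Polynomial.X ^ (k - 1 - (m : ℕ)))) ≤
          Polynomial.natDegree (L ^ (m : ℕ) * Polynomial.X ^ (k - 1 - (m : ℕ)))) ?_
        refine le_trans (Polynomial.natDegree_mul_le) ?_
        have h1 : (L ^ (m : ℕ)).natDegree ≤ (m : ℕ) := by
          refine le_trans (Polynomial.natDegree_pow_le) ?_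
          have := hLnd
          nlinarith [m.isLt]
        have h2 : (Polynomial.X ^ (k - 1 - (m : ℕ)) : F[X]).natDegree ≤ k - 1 - (m : ℕ) := by
          simp [Polynomial.natDegree_X_pow]
        have := m.isLt
        omega
      have hPeval : ∀ z : F, P.eval z =
          ∑ m : Fin k, c m * ((a₀ * z + 1) ^ (m : ℕ) * z ^ (k - 1 - (m : ℕ))) := by
        intro z
        rw [hPdef, Polynomial.eval_finset_sum]
        refine Finset.sum_congr rfl fun m _ => ?_
        simp [hLdef]
      refine ⟨P, degree_lt_of_natDegree_lt (by omega), fun i => ?_⟩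
      rw [hc i]
      cases hai : α i with
      | none =>
        rw [evalHomog_none k hk1, hβn hai, hgn hai, hPeval 0]
        congr 1
        rw [Finset.sum_eq_single (⟨k - 1, by omega⟩ : Fin k)]
        · simp
        · intro j _ hj
          have hjlt : (j : ℕ) < k - 1 := by
            rcases Nat.lt_or_ge (j : ℕ) (k - 1) with h | h
            · exact h
            · exfalso
              apply hj
              apply Fin.ext
              have := j.isLt
              simp only
              omega
          rw [zero_pow (by omega : k - 1 - (j : ℕ) ≠ 0)]
          ring
        · intro h; exact absurd (Finset.mem_univ _) h
      | some t =>
        rw [evalHomog_some, hβs hai, hgs hai, hPeval, mul_assoc]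
        congr 1
        rw [Finset.mul_sum]
        refine Finset.sum_congr rfl fun m _ => ?_
        have hmle : (m : ℕ) ≤ k - 1 := by have := m.isLt; omega
        have hsplit : (t - a₀) ^ (k - 1) =
            (t - a₀) ^ (m : ℕ) * (t - a₀) ^ (k - 1 - (m : ℕ)) := by
          rw [← pow_add]; congr 1; omega
        have hu : (t - a₀) * (t - a₀)⁻¹ = 1 := mul_inv_cancel₀ (hsub hai)
        have h2 : (t - a₀) * (a₀ * (t - a₀)⁻¹ + 1) = t := by
          rw [mul_add, mul_one, mul_left_comm, hu, mul_one]; ring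
        symm
        calc (t - a₀) ^ (k - 1) *
              (c m * ((a₀ * (t - a₀)⁻¹ + 1) ^ (m : ℕ) * ((t - a₀)⁻¹) ^ (k - 1 - (m : ℕ))))
            = c m * (((t - a₀) * (a₀ * (t - a₀)⁻¹ + 1)) ^ (m : ℕ) *
              ((t - a₀) * (t - a₀)⁻¹) ^ (k - 1 - (m : ℕ))) := by
              rw [hsplit, mul_pow, mul_pow]; ring
          _ = c m * t ^ (m : ℕ) := by rw [h2, hu, one_pow, mul_one]
    · -- backward: affine polynomial membership → Cauchy membership
      rintro ⟨P, hdeg, hP⟩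
      have hPnd : P.natDegree < k := natDeg_lt' hk1 hdeg
      set Q : F[X] := ∑ j ∈ Finset.range k,
        Polynomial.C (P.coeff j) * (Polynomial.X - Polynomial.C a₀) ^ (k - 1 - j) with hQdef
      have hQnd : Q.natDegree ≤ k - 1 := by
        rw [hQdef]
        refine Polynomial.natDegree_sum_le_of_forall_le _ _ fun j _ => ?_
        refine le_trans (Polynomial.natDegree_mul_le) ?_
        rw [Polynomial.natDegree_C]
        refine le_trans (by omega : 0 + (((Polynomial.X - Polynomial.C a₀) ^ (k - 1 - j) :
          F[X]).natDegree) ≤ ((Polynomial.X - Polynomial.C a₀) ^ (k - 1 - j) : F[X]).natDegree) ?_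
        refine le_trans (Polynomial.natDegree_pow_le) ?_
        rw [Polynomial.natDegree_X_sub_C]
        omega
      have hQeval : ∀ z : F, Q.eval z =
          ∑ j ∈ Finset.range k, P.coeff j * (z - a₀) ^ (k - 1 - j) := by
        intro z
        rw [hQdef, Polynomial.eval_finset_sum]
        refine Finset.sum_congr rfl fun j _ => ?_
        simp
      have hQtop : Q.coeff (k - 1) = P.coeff 0 := by
        rw [hQdef, Polynomial.finset_sum_coeff]
        rw [Finset.sum_eq_single 0]
        · have hmonic : ((Polynomial.X - Polynomial.C a₀) ^ (k - 1 - 0) : F[X]).Monic :=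
            (Polynomial.monic_X_sub_C a₀).pow _
          have hnd : ((Polynomial.X - Polynomial.C a₀) ^ (k - 1 - 0) : F[X]).natDegree
              = k - 1 := by
            rw [Polynomial.natDegree_pow, Polynomial.natDegree_X_sub_C]; omega
          have hco := hmonic.coeff_natDegree
          rw [hnd] at hco
          rw [Polynomial.coeff_C_mul, hco, mul_one]
        · intro j hj hjne
          rw [Polynomial.coeff_C_mul]
          have hlt : ((Polynomial.X - Polynomial.C a₀) ^ (k - 1 - j) : F[X]).natDegree
              < k - 1 := by
            rw [Polynomial.natDegree_pow, Polynomial.natDegree_X_sub_C]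
            have := Finset.mem_range.mp hj
            omega
          rw [Polynomial.coeff_eq_zero_of_natDegree_lt hlt, mul_zero]
        · intro h
          exact absurd (Finset.mem_range.mpr (by omega)) h
      refine ⟨fun m : Fin k => Q.coeff m, fun i => ?_⟩
      rw [hP i]
      cases hai : α i with
      | none =>
        rw [evalHomog_none k hk1, hβn hai, hgn hai]
        simp only
        rw [hQtop, Polynomial.coeff_zero_eq_eval_zero]
      | some t =>
        rw [evalHomog_some, hβs hai, hgs hai]
        have hsum : ∑ j : Fin k, Q.coeff j * t ^ (j : ℕ) = Q.eval t := by
          rw [Polynomial.eval_eq_sum_range' (by omega : Q.natDegree < k)]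
          exact Fin.sum_univ_eq_sum_range (fun j => Q.coeff j * t ^ j) k
        rw [hsum, hQeval t, mul_assoc]
        congr 1
        rw [Polynomial.eval_eq_sum_range' hPnd, Finset.mul_sum]
        refine Finset.sum_congr rfl fun j hj => ?_
        have hjle : j ≤ k - 1 := by have := Finset.mem_range.mp hj; omega
        have hsplit : (t - a₀) ^ (k - 1) =
            (t - a₀) ^ (k - 1 - j) * (t - a₀) ^ j := by
          rw [← pow_add]; congr 1; omega
        have hu : (t - a₀) * (t - a₀)⁻¹ = 1 := mul_inv_cancel₀ (hsub hai)
        symm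
        calc P.coeff j * (t - a₀) ^ (k - 1 - j)
            = P.coeff j * (t - a₀) ^ (k - 1 - j) * ((t - a₀) * (t - a₀)⁻¹) ^ j := by
              rw [hu, one_pow, mul_one]
          _ = (t - a₀) ^ (k - 1) * (P.coeff j * ((t - a₀)⁻¹) ^ j) := by
              rw [hsplit, mul_pow]; ring

end Aux

/-- A `q`-ary Cauchy code of length `q` and dimension `2 ≤ k ≤ q - 2` which is a left
`G`-code for a group `G` of order `q`: then `G` is elementary abelian of exponent
`p = char F` and `C` is permutation equivalent to the parity check extended narrow sense
Reed-Solomon code `C_k((1, ξ, ..., ξ^{q-2}, 0), 1)`, `ξ` a primitive element. -/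
theorem stmt19 {F : Type*} [Field F] [Fintype F] {q k p : ℕ}
    (hq : q = Fintype.card F) (hp : p = ringChar F)
    (hk2 : 2 ≤ k) (hkq : k ≤ q - 2)
    (α : Fin q → Option F) (hα : Function.Injective α)
    (f : Fin q → F) (hf : ∀ i, f i ≠ 0)
    (G : Type*) [Group G] [Fintype G] (hG : Fintype.card G = q)
    (hcode : IsLeftGCode G (CauchyCode F q k α f)) :
    (∀ x y : G, x * y = y * x) ∧ (∀ x : G, x ^ p = 1) ∧
      ∃ (ξ : F) (σ : Equiv.Perm (Fin q)),
        (∀ a : F, a ≠ 0 → ∃ m : ℕ, ξ ^ m = a) ∧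
        ∀ x : Fin q → F, x ∈ CauchyCode F q k α f ↔
          permVec σ x ∈ CauchyCode F q k
            (fun i => if (i : ℕ) < q - 1 then some (ξ ^ (i : ℕ)) else some 0)
            (fun _ => 1) := by
  
  classical
  have hq2 : 2 ≤ q - 2 := le_trans hk2 hkq
  have hq4 : 4 ≤ q := by omega
  obtain ⟨φ, hφ⟩ := hcode
  obtain ⟨β, g, hβ, hg, hCmem⟩ := affine_form (k := k) hq (by omega) α hα f hf
  have hmemC : ∀ x : Fin q → F, x ∈ CauchyCode F q k α f ↔ PMem k β g x := fun x => hCmem x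
  set T : G → Equiv.Perm (Fin q) := fun a => (φ.trans (Equiv.mulLeft a)).trans φ.symm with hT
  have hTapp : ∀ (a : G) i, T a i = φ.symm (a * φ i) := fun a i => rfl
  have hTcomp : ∀ (a b : G) i, T a (T b i) = T (a * b) i := by
    intro a b i
    rw [hTapp, hTapp, hTapp, Equiv.apply_symm_apply, mul_assoc]
  have hTone : ∀ i, T 1 i = i := by
    intro i
    rw [hTapp, one_mul, Equiv.symm_apply_apply]
  have hMem : ∀ (a : G) (x : Fin q → F), PMem k β g x → PMem k β g (fun i => x (T a i)) := by
    intro a x hx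
    exact (hmemC _).mp (hφ a x ((hmemC x).mpr hx))
  have hDMem : ∀ (a : G) (y : Fin q → F), PMem (q - k) β (fun i => (g i)⁻¹) y →
      PMem (q - k) β (fun i => (g i)⁻¹) (fun i => y (T a i)) := by
    intro a y hy
    refine dual_of_pair hq (by omega) (by omega) β g hβ hg (fun x hx => ?_)
    have hx' : PMem k β g (fun i => x (T a⁻¹ i)) := hMem a⁻¹ x hx
    have hp0 := pair_zero hq (by omega) (by omega) β g hβ hg hx' hy
    rw [← Equiv.sum_comp (T a) (fun i => x (T a⁻¹ i) * y i)] at hp0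
    rw [show (∑ i, x i * y (T a i)) =
        ∑ i, x (T a⁻¹ (T a i)) * y (T a i) from Finset.sum_congr rfl fun i _ => by
          rw [hTcomp, inv_mul_cancel, hTone]]
    exact hp0
  have hAff : ∀ a : G, ∃ u v c : F, u ≠ 0 ∧ c ≠ 0 ∧
      (∀ i, β (T a i) = u * β i + v) ∧ ∀ i, g (T a i) = c * g i :=
    fun a => aut_affine hq hk2 (by omega) β g hβ hg (T a) (hMem a) (hDMem a)
  choose u v cc hu hcc hβT hgT using hAff
  set i0 : Fin q := ⟨0, by omega⟩ with hi0def
  set i1 : Fin q := ⟨1, by omega⟩ with hi1def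
  have hβ01 : β i0 ≠ β i1 := by
    intro h
    have h2 := hβ.1 h
    rw [hi0def, hi1def, Fin.mk.injEq] at h2
    omega
  have huniq : ∀ (a : G) (u' v' : F), (∀ i, β (T a i) = u' * β i + v') →
      u' = u a ∧ v' = v a := by
    intro a u' v' h'
    have e0 := (h' i0).symm.trans (hβT a i0)
    have e1 := (h' i1).symm.trans (hβT a i1)
    have hu' : u' = u a := by
      by_contra hne
      have hz : (u' - u a) * (β i0 - β i1) = 0 := by linear_combination e0 - e1
      rcases mul_eq_zero.mp hz with h | h
      · exact hne (by linear_combination h)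
      · exact hβ01 (by linear_combination h)
    refine ⟨hu', ?_⟩
    rw [hu'] at e0
    linear_combination e0
  have humul : ∀ a b : G, u (a * b) = u a * u b ∧ v (a * b) = u a * v b + v a := by
    intro a b
    have hcomp : ∀ i, β (T (a * b) i) = (u a * u b) * β i + (u a * v b + v a) := by
      intro i
      calc β (T (a * b) i) = β (T a (T b i)) := by rw [hTcomp]
        _ = u a * β (T b i) + v a := hβT a _
        _ = (u a * u b) * β i + (u a * v b + v a) := by rw [hβT b]; ring
    obtain ⟨h1, h2⟩ := huniq (a * b) (u a * u b) (u a * v b + v a) hcomp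
    exact ⟨h1.symm, h2.symm⟩
  have hone : u 1 = 1 ∧ v 1 = 0 := by
    obtain ⟨h1, h2⟩ := huniq 1 1 0 (fun i => by rw [hTone]; ring)
    exact ⟨h1.symm, h2.symm⟩
  have korder : ∀ w : G → F, (∀ a, w a ≠ 0) → (∀ a b, w (a * b) = w a * w b) →
      w 1 = 1 → ∀ a, w a = 1 := by
    intro w hw hmul h1 a
    have hpow : ∀ n : ℕ, w (a ^ n) = w a ^ n := by
      intro n
      induction n with
      | zero => simpa using h1
      | succ n ih => rw [pow_succ, pow_succ, hmul, ih]
    have hq1 : w a ^ q = 1 := by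
      rw [← hpow, show a ^ q = 1 from by rw [← hG]; exact pow_card_eq_one, h1]
    have hq2' : w a ^ (q - 1) = 1 := by
      have h := FiniteField.pow_card_sub_one_eq_one (w a) (hw a)
      rwa [← hq] at h
    have hsucc : w a ^ q = w a ^ (q - 1) * w a := by
      rw [← pow_succ]; congr 1; omega
    rw [hq1, hq2', one_mul] at hsucc
    exact hsucc.symm
  have hu1 : ∀ a : G, u a = 1 := korder u hu (fun a b => (humul a b).1) hone.1
  have hβTv : ∀ (a : G) i, β (T a i) = β i + v a := by
    intro a i
    rw [hβT a i, hu1, one_mul]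
  have hvadd : ∀ a b : G, v (a * b) = v a + v b := by
    intro a b
    rw [(humul a b).2, hu1, one_mul, add_comm]
  have hvinj : Function.Injective v := by
    intro a b hab
    have h1 : β (T a i0) = β (T b i0) := by rw [hβTv, hβTv, hab]
    have h2 : T a i0 = T b i0 := hβ.1 h1
    rw [hTapp, hTapp] at h2
    have h3 := φ.symm.injective h2
    exact mul_right_cancel h3
  have hvbij : Function.Bijective v :=
    (Fintype.bijective_iff_injective_and_card v).mpr ⟨hvinj, by rw [hG, hq]⟩
  have hcomm : ∀ x y : G, x * y = y * x := by
    intro x y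
    apply hvinj
    rw [hvadd, hvadd, add_comm]
  have hvpow : ∀ (x : G) (n : ℕ), v (x ^ n) = n • v x := by
    intro x n
    induction n with
    | zero => simpa using hone.2
    | succ n ih => rw [pow_succ, hvadd, ih, succ_nsmul]
  have hpel : ∀ x : G, x ^ p = 1 := by
    intro x
    apply hvinj
    rw [hvpow, hone.2, nsmul_eq_mul]
    have hchar : (p : F) = 0 := by
      rw [hp]
      exact CharP.cast_eq_zero F (ringChar F)
    rw [hchar, zero_mul]
  -- the multiplier is constant
  have hccmul : ∀ a b : G, cc (a * b) = cc a * cc b := by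
    intro a b
    have h1 : g (T (a * b) i0) = cc (a * b) * g i0 := hgT _ i0
    have h2 : g (T (a * b) i0) = (cc a * cc b) * g i0 := by
      rw [← hTcomp a b i0, hgT a, hgT b]; ring
    exact mul_right_cancel₀ (hg i0) (h1.symm.trans h2)
  have hcc1 : cc 1 = 1 := by
    have h1 : g (T 1 i0) = cc 1 * g i0 := hgT 1 i0
    rw [hTone] at h1
    exact (mul_right_cancel₀ (hg i0) (by linear_combination -h1 :
      cc 1 * g i0 = (1 : F) * g i0))
  have hccone : ∀ a : G, cc a = 1 := korder cc hcc hccmul hcc1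
  have hgconst : ∀ i j, g i = g j := by
    intro i j
    obtain ⟨a, ha⟩ := hvbij.2 (β j - β i)
    have h1 : β (T a i) = β j := by rw [hβTv, ha]; ring
    have h2 : T a i = j := hβ.1 h1
    rw [← h2, hgT a i, hccone a, one_mul]
  -- primitive element
  obtain ⟨ζ, hζ⟩ := IsCyclic.exists_generator (α := Fˣ)
  set ξ : F := (ζ : F) with hξdef
  have horder : orderOf ζ = q - 1 := by
    rw [orderOf_eq_card_of_forall_mem_zpowers hζ, Nat.card_units,
      Nat.card_eq_fintype_card, ← hq]
  have hprim : ∀ a : F, a ≠ 0 → ∃ m : ℕ, ξ ^ m = a := by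
    intro a ha
    obtain ⟨m, hm⟩ := mem_powers_iff_mem_zpowers.mpr (hζ (Units.mk0 a ha))
    refine ⟨m, ?_⟩
    have := congrArg (Units.val) hm
    rw [Units.val_pow_eq_pow_val] at this
    simpa using this
  set β' : Fin q → F := fun i => if (i : ℕ) < q - 1 then ξ ^ (i : ℕ) else 0 with hβ'def
  have hβ'val : ∀ i : Fin q, β' i = if (i : ℕ) < q - 1 then ξ ^ (i : ℕ) else 0 :=
    fun i => rfl
  have hξpow_ne : ∀ m : ℕ, ξ ^ m ≠ 0 := fun m => pow_ne_zero m (Units.ne_zero ζ)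
  have hβ'inj : Function.Injective β' := by
    intro i j hij
    rw [hβ'val i, hβ'val j] at hij
    by_cases hi : (i : ℕ) < q - 1 <;> by_cases hj : (j : ℕ) < q - 1
    · rw [if_pos hi, if_pos hj] at hij
      have hunits : (ζ ^ (i : ℕ) : Fˣ) = ζ ^ (j : ℕ) := by
        apply Units.ext
        rw [Units.val_pow_eq_pow_val, Units.val_pow_eq_pow_val]
        exact hij
      have := pow_injOn_Iio_orderOf (x := ζ) (by rw [horder]; exact hi)
        (by rw [horder]; exact hj) hunits
      exact Fin.ext this
    · rw [if_pos hi, if_neg hj] at hij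
      exact absurd hij (hξpow_ne _)
    · rw [if_neg hi, if_pos hj] at hij
      exact absurd hij.symm (hξpow_ne _)
    · apply Fin.ext
      have h1 := i.isLt
      have h2 := j.isLt
      omega
  have hβ'bij : Function.Bijective β' :=
    (Fintype.bijective_iff_injective_and_card β').mpr ⟨hβ'inj, by simp [← hq]⟩
  set σ : Equiv.Perm (Fin q) :=
    (Equiv.ofBijective β hβ).trans (Equiv.ofBijective β' hβ'bij).symm with hσdef
  have hσβ : ∀ i, β' (σ i) = β i := by
    intro i
    have h1 : β' (σ i) = (Equiv.ofBijective β' hβ'bij) (σ i) := rfl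
    rw [h1, hσdef]
    simp only [Equiv.trans_apply]
    rw [Equiv.apply_symm_apply]
    rfl
  -- final equivalence
  refine ⟨hcomm, hpel, ξ, σ, hprim, fun x => ?_⟩
  have hγ := hg i0
  have hstrip : PMem k β g x ↔
      ∃ P : F[X], P.degree < (k : ℕ) ∧ ∀ i, x i = P.eval (β i) := by
    constructor
    · rintro ⟨P, h1, h2⟩
      refine ⟨Polynomial.C (g i0) * P, ?_, fun i => ?_⟩
      · rwa [Polynomial.degree_C_mul hγ]
      · rw [h2 i, hgconst i i0, Polynomial.eval_mul, Polynomial.eval_C]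
    · rintro ⟨P, h1, h2⟩
      refine ⟨Polynomial.C (g i0)⁻¹ * P, ?_, fun i => ?_⟩
      · rwa [Polynomial.degree_C_mul (inv_ne_zero hγ)]
      · rw [h2 i, hgconst i i0, Polynomial.eval_mul, Polynomial.eval_C]
        rw [mul_inv_cancel_left₀ hγ]
  have hC'mem : permVec σ x ∈ CauchyCode F q k
      (fun i => if (i : ℕ) < q - 1 then some (ξ ^ (i : ℕ)) else some 0)
      (fun _ => (1 : F)) ↔
      ∃ c : Fin k → F, ∀ i, permVec σ x i =
        (1 : F) * ∑ j : Fin k, c j * β' i ^ (j : ℕ) := by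
    have hloc : ∀ i : Fin q,
        (if (i : ℕ) < q - 1 then some (ξ ^ (i : ℕ)) else some 0) = some (β' i) := by
      intro i
      rw [hβ'val i]
      by_cases h : (i : ℕ) < q - 1
      · rw [if_pos h, if_pos h]
      · rw [if_neg h, if_neg h]
    constructor
    · rintro ⟨c, hc⟩
      refine ⟨c, fun i => ?_⟩
      have h5 := hc i
      beta_reduce at h5
      rw [h5, hloc i, evalHomog_some]
    · rintro ⟨c, hc⟩
      refine ⟨c, fun i => ?_⟩
      show permVec σ x i = 1 * evalHomog k c
        (coordFn (if (i : ℕ) < q - 1 then some (ξ ^ (i : ℕ)) else some 0))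
      rw [hc i, hloc i, evalHomog_some]
  rw [hmemC x, hstrip, hC'mem, coeff_poly_iff (by omega : 0 < k)]
  constructor
  · rintro ⟨P, h1, h2⟩
    refine ⟨P, h1, fun i => ?_⟩
    have h3 := h2 (σ.symm i)
    rw [show permVec σ x i = x (σ.symm i) from rfl, h3, one_mul]
    congr 1
    rw [← hσβ (σ.symm i), Equiv.apply_symm_apply]
  · rintro ⟨P, h1, h2⟩
    refine ⟨P, h1, fun i => ?_⟩
    have h3 := h2 (σ i)
    rw [show permVec σ x (σ i) = x (σ.symm (σ i)) from rfl, Equiv.symm_apply_apply] at h3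
    rw [h3, one_mul, hσβ]
end
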